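/- arXiv:1101.4102 — 4 statements merged into one kernel-verified Lean document; each statement's English description precedes it below -/
import Mathlib

section
/- For two disks of common radius r > 0 in the plane, the set K_{12} = {(q₁, q₂) ∈ ℝ² × ℝ² : |q₂ − q₁| − 2r ≥ 0} of non-overlapping configurations is η-prox-regular with η = r√2; that is, for every boundary point q of K_{12} and every unit proximal normal vector v at q, the open ball B(q + r√2·v, r√2) does not meet K_{12}. -/
set_option maxHeartbeats 1000000


noncomputable section
open Metric

/-- Proximal normal cone: `v ∈ N_K(q)` iff `q` belongs to the metric projection
of `q + α v` onto `K` for some `α > 0`. -/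
def proxNormalCone {E : Type*} [NormedAddCommGroup E] [NormedSpace ℝ E]
    (K : Set E) (q : E) : Set E :=
  {v | ∃ α : ℝ, 0 < α ∧ ∀ y ∈ K, dist q (q + α • v) ≤ dist y (q + α • v)}

/-- Configurations of two non-overlapping disks of radius `r` in the plane,
as a subset of `ℝ⁴ = ℝ² × ℝ²` (coordinates `(q₁, q₂) = (z 0, z 1, z 2, z 3)`). -/
def twoDiskSet (r : ℝ) : Set (EuclideanSpace ℝ (Fin 4)) :=
  {z | 2 * r ≤ Real.sqrt ((z 2 - z 0) ^ 2 + (z 3 - z 1) ^ 2)}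


lemma aux_cross (r α a b w1 w2 : ℝ) (hr : 0 < r) (hα : 0 < α)
    (hab : a^2 + b^2 = 4*r^2)
    (hkey : ∀ u1 u2 : ℝ, 4*r^2 ≤ u1^2 + u2^2 →
      4*α^2*(w1^2 + w2^2) ≤ (u1 - (a - 2*α*w1))^2 + (u2 - (b - 2*α*w2))^2) :
    a*w2 - b*w1 = 0 := by
  rcases eq_or_lt_of_le (by positivity : (0:ℝ) ≤ (a - 2*α*w1)^2 + (b - 2*α*w2)^2) with hm | hm
  · have h1 : (a - 2*α*w1)^2 = 0 :=
      le_antisymm (by nlinarith [sq_nonneg (b - 2*α*w2)]) (sq_nonneg _)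
    have h2 : (b - 2*α*w2)^2 = 0 :=
      le_antisymm (by nlinarith [sq_nonneg (a - 2*α*w1)]) (sq_nonneg _)
    have e1 : a - 2*α*w1 = 0 := by
      have := sq_eq_zero_iff.mp h1; exact this
    have e2 : b - 2*α*w2 = 0 := by
      have := sq_eq_zero_iff.mp h2; exact this
    linear_combination w2*e1 - w1*e2
  · set m := Real.sqrt ((a - 2*α*w1)^2 + (b - 2*α*w2)^2) with hmdef
    have hm2 : m^2 = (a - 2*α*w1)^2 + (b - 2*α*w2)^2 := Real.sq_sqrt (by positivity)
    have hm0 : 0 < m := Real.sqrt_pos.mpr hm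
    have hmne : m ≠ 0 := ne_of_gt hm0
    have hcirc : (2*r*(a - 2*α*w1)/m)^2 + (2*r*(b - 2*α*w2)/m)^2 = 4*r^2 := by
      have e : (2*r*(a - 2*α*w1)/m)^2 + (2*r*(b - 2*α*w2)/m)^2
          = ((a - 2*α*w1)^2 + (b - 2*α*w2)^2) * ((2*r)^2 / m^2) := by ring
      rw [e, ← hm2, mul_comm, div_mul_cancel₀ _ (pow_ne_zero 2 hmne)]
      ring
    have h := hkey _ _ (le_of_eq hcirc.symm)
    have heq1 : (2*r*(a - 2*α*w1)/m - (a - 2*α*w1))^2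
        + (2*r*(b - 2*α*w2)/m - (b - 2*α*w2))^2 = (2*r - m)^2 := by
      have e : (2*r*(a - 2*α*w1)/m - (a - 2*α*w1))^2
          + (2*r*(b - 2*α*w2)/m - (b - 2*α*w2))^2
          = ((a - 2*α*w1)^2 + (b - 2*α*w2)^2) * ((2*r/m - 1)^2) := by ring
      have e2 : (2*r/m - 1)^2 = (2*r - m)^2 / m^2 := by
        field_simp
      rw [e, e2, ← hm2, mul_comm, div_mul_cancel₀ _ (pow_ne_zero 2 hmne)]
    have hge : 2*r*m ≤ a*(a - 2*α*w1) + b*(b - 2*α*w2) := by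
      linarith only [h, heq1, hm2, hab]
    have hlagid : (a*(b - 2*α*w2) - b*(a - 2*α*w1))^2
        = (a^2 + b^2)*((a - 2*α*w1)^2 + (b - 2*α*w2)^2)
          - (a*(a - 2*α*w1) + b*(b - 2*α*w2))^2 := by ring
    have h8 : (a*(b - 2*α*w2) - b*(a - 2*α*w1))^2
        = 4*r^2*m^2 - (a*(a - 2*α*w1) + b*(b - 2*α*w2))^2 := by
      rw [hlagid, hab, ← hm2]
    have hlag : (a*(b - 2*α*w2) - b*(a - 2*α*w1))^2 ≤ 0 := by
      rw [h8]
      nlinarith [mul_self_le_mul_self (by positivity : (0:ℝ) ≤ 2*r*m) hge]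
    have hcr0 : a*(b - 2*α*w2) - b*(a - 2*α*w1) = 0 := by
      have e2 : (a*(b - 2*α*w2) - b*(a - 2*α*w1))^2 = 0 := le_antisymm hlag (sq_nonneg _)
      exact sq_eq_zero_iff.mp e2
    have hfac : (2*α) * (a*w2 - b*w1) = 0 := by linear_combination (-1 : ℝ)*hcr0
    rcases mul_eq_zero.mp hfac with h' | h'
    · exact absurd h' (by positivity)
    · exact h'

/-- The set of non-overlapping configurations of two disks of radius `r` is
`r√2`-prox-regular at every boundary point. -/
theorem two_disks_prox_regular (r : ℝ) (hr : 0 < r) :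
    ∀ q ∈ frontier (twoDiskSet r), ∀ v ∈ proxNormalCone (twoDiskSet r) q, ‖v‖ = 1 →
      ball (q + (r * Real.sqrt 2) • v) (r * Real.sqrt 2) ∩ twoDiskSet r = ∅ := by
  have hset : ∀ r' : ℝ, 0 < r' → twoDiskSet r' =
      {z : EuclideanSpace ℝ (Fin 4) | 4*r'^2 ≤ (z 2 - z 0)^2 + (z 3 - z 1)^2} := by
    intro r' hr'
    ext z
    simp only [twoDiskSet, Set.mem_setOf_eq]
    constructor
    · intro h
      nlinarith [Real.sq_sqrt (by positivity : (0:ℝ) ≤ (z 2 - z 0)^2 + (z 3 - z 1)^2),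
        mul_self_le_mul_self (by positivity : (0:ℝ) ≤ 2*r') h]
    · intro h
      rw [show 2*r' = Real.sqrt ((2*r')^2) by rw [Real.sqrt_sq (by positivity)]]
      exact Real.sqrt_le_sqrt (by nlinarith)
  intro q hq v hv hv1
  obtain ⟨α, hα, hmin⟩ := hv
  set η := r * Real.sqrt 2 with hηdef
  have hη2 : η^2 = 2*r^2 := by
    rw [hηdef, mul_pow, Real.sq_sqrt (by norm_num : (0:ℝ) ≤ 2)]; ring
  have hηpos : 0 < η := by rw [hηdef]; positivity
  -- components of the norm of v
  have hvsum : v 0^2 + v 1^2 + v 2^2 + v 3^2 = 1 := by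
    have h0 := EuclideanSpace.norm_eq v
    rw [hv1] at h0
    have h2 : ∑ i, ‖v i‖^2 = 1 := by
      nlinarith [Real.sq_sqrt (by positivity : (0:ℝ) ≤ ∑ i, ‖v i‖^2)]
    rw [Fin.sum_univ_four] at h2
    simpa [Real.norm_eq_abs, sq_abs] using h2
  -- boundary point: a² + b² = 4r²
  have hcont : Continuous fun z : EuclideanSpace ℝ (Fin 4) =>
      (z 2 - z 0)^2 + (z 3 - z 1)^2 := by fun_prop
  have hab : (q 2 - q 0)^2 + (q 3 - q 1)^2 = 4*r^2 := by
    rw [hset r hr] at hq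
    have hq1 : q ∈ closure {z : EuclideanSpace ℝ (Fin 4) |
        4*r^2 ≤ (z 2 - z 0)^2 + (z 3 - z 1)^2} := hq.1
    have hq2 : q ∉ interior {z : EuclideanSpace ℝ (Fin 4) |
        4*r^2 ≤ (z 2 - z 0)^2 + (z 3 - z 1)^2} := hq.2
    have hclosed : IsClosed {z : EuclideanSpace ℝ (Fin 4) |
        4*r^2 ≤ (z 2 - z 0)^2 + (z 3 - z 1)^2} := isClosed_le continuous_const hcont
    have hle : 4*r^2 ≤ (q 2 - q 0)^2 + (q 3 - q 1)^2 := by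
      have := hclosed.closure_eq ▸ hq1; exact this
    have hge : (q 2 - q 0)^2 + (q 3 - q 1)^2 ≤ 4*r^2 := by
      by_contra h
      push_neg at h
      exact hq2 (interior_maximal (fun z hz => le_of_lt hz)
        (isOpen_lt continuous_const hcont) h)
    linarith
  -- the key variational inequality, in coordinates
  have hqK : ∀ u0 u1 u2 u3 : ℝ,
      4*r^2 ≤ (q 2 - q 0 + (u2 - u0))^2 + (q 3 - q 1 + (u3 - u1))^2 →
      α^2 ≤ (u0 - α * v 0)^2 + (u1 - α * v 1)^2 + (u2 - α * v 2)^2 + (u3 - α * v 3)^2 := by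
    intro u0 u1 u2 u3 hu
    set y : EuclideanSpace ℝ (Fin 4) :=
      (WithLp.equiv 2 (Fin 4 → ℝ)).symm ![q 0 + u0, q 1 + u1, q 2 + u2, q 3 + u3] with hy
    have hy0 : y 0 = q 0 + u0 := by rw [hy]; simp
    have hy1 : y 1 = q 1 + u1 := by rw [hy]; simp
    have hy2 : y 2 = q 2 + u2 := by rw [hy]; simp
    have hy3 : y 3 = q 3 + u3 := by rw [hy]; simp
    have hyK : y ∈ twoDiskSet r := by
      rw [hset r hr]
      simp only [Set.mem_setOf_eq, hy0, hy1, hy2, hy3]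
      linarith [hu]
    have h1 := hmin y hyK
    rw [EuclideanSpace.dist_eq, EuclideanSpace.dist_eq] at h1
    simp only [Real.dist_eq, sq_abs, Fin.sum_univ_four, PiLp.add_apply, PiLp.smul_apply,
      smul_eq_mul, hy0, hy1, hy2, hy3] at h1
    have eL : (q 0 - (q 0 + α * v 0))^2 + (q 1 - (q 1 + α * v 1))^2
        + (q 2 - (q 2 + α * v 2))^2 + (q 3 - (q 3 + α * v 3))^2 = α^2 := by
      linear_combination α^2 * hvsum
    rw [eL, Real.sqrt_sq hα.le] at h1
    have hBnn : (0:ℝ) ≤ (q 0 + u0 - (q 0 + α * v 0))^2 + (q 1 + u1 - (q 1 + α * v 1))^2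
        + (q 2 + u2 - (q 2 + α * v 2))^2 + (q 3 + u3 - (q 3 + α * v 3))^2 := by positivity
    have h3 := mul_self_le_mul_self hα.le h1
    rw [Real.mul_self_sqrt hBnn] at h3
    have e : (q 0 + u0 - (q 0 + α * v 0))^2 + (q 1 + u1 - (q 1 + α * v 1))^2
        + (q 2 + u2 - (q 2 + α * v 2))^2 + (q 3 + u3 - (q 3 + α * v 3))^2
        = (u0 - α * v 0)^2 + (u1 - α * v 1)^2 + (u2 - α * v 2)^2 + (u3 - α * v 3)^2 := by
      ring
    rw [e] at h3
    linarith [h3]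
  -- step A : v 2 = -v 0 and v 3 = -v 1
  have hA := hqK (α*(v 0 + v 2)/2) (α*(v 1 + v 3)/2) (α*(v 0 + v 2)/2) (α*(v 1 + v 3)/2)
    (by simp only [sub_self, add_zero]; linarith [hab])
  have eA : (α*(v 0 + v 2)/2 - α*v 0)^2 + (α*(v 1 + v 3)/2 - α*v 1)^2
      + (α*(v 0 + v 2)/2 - α*v 2)^2 + (α*(v 1 + v 3)/2 - α*v 3)^2
      = α^2*((v 2 - v 0)^2 + (v 3 - v 1)^2)/2 := by ring
  rw [eA] at hA
  have h0 : α^2 * ((v 0 + v 2)^2 + (v 1 + v 3)^2) ≤ 0 := by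
    have e3 : α^2*((v 0 + v 2)^2 + (v 1 + v 3)^2)
        = 2*(α^2*(v 0^2 + v 1^2 + v 2^2 + v 3^2))
          - 2*(α^2*((v 2 - v 0)^2 + (v 3 - v 1)^2)/2) := by ring
    rw [e3, hvsum, mul_one]
    linarith [hA]
  have hsum0 : (v 0 + v 2)^2 + (v 1 + v 3)^2 ≤ 0 := by
    by_contra hcon
    push_neg at hcon
    exact absurd h0 (not_le.mpr (mul_pos (by positivity) hcon))
  have h02 : v 2 = -v 0 := by
    have e2 : (v 0 + v 2)^2 = 0 :=
      le_antisymm (by nlinarith [sq_nonneg (v 1 + v 3)]) (sq_nonneg _)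
    have := sq_eq_zero_iff.mp e2
    linarith
  have h13 : v 3 = -v 1 := by
    have e2 : (v 1 + v 3)^2 = 0 :=
      le_antisymm (by nlinarith [sq_nonneg (v 0 + v 2)]) (sq_nonneg _)
    have := sq_eq_zero_iff.mp e2
    linarith
  rw [h02, h13] at hvsum
  have hv12 : v 0^2 + v 1^2 = 1/2 := by linear_combination hvsum / 2
  -- step B : positive inner product with (a, b)
  have hdot : 0 < (q 2 - q 0) * v 0 + (q 3 - q 1) * v 1 := by
    by_contra h
    push_neg at h
    have hB := hqK (α * v 0) (α * v 1) (α * v 2) (α * v 3)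
      (by rw [h02, h13]
          linarith [hab, mul_nonneg hα.le (neg_nonneg.2 h),
            sq_nonneg (α * v 0), sq_nonneg (α * v 1)])
    have hB0 : α^2 ≤ 0 := by simpa using hB
    exact absurd hB0 (by positivity : (0:ℝ) < α^2).not_ge
  -- step C : cross product vanishes: a * v 1 = b * v 0
  have hkey : ∀ u1 u2 : ℝ, 4*r^2 ≤ u1^2 + u2^2 →
      4*α^2*(v 0^2 + v 1^2) ≤ (u1 - ((q 2 - q 0) - 2*α*v 0))^2
        + (u2 - ((q 3 - q 1) - 2*α*v 1))^2 := by
    intro u1 u2 hu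
    have h := hqK (-(u1 - (q 2 - q 0))/2) (-(u2 - (q 3 - q 1))/2)
      ((u1 - (q 2 - q 0))/2) ((u2 - (q 3 - q 1))/2) (by linarith [hu])
    rw [h02, h13] at h
    have e2α : 4*α^2*(v 0^2 + v 1^2) = 2*α^2 := by linear_combination 4*α^2*hv12
    linarith [h, e2α]
  have hcross : (q 2 - q 0) * v 1 - (q 3 - q 1) * v 0 = 0 :=
    aux_cross r α (q 2 - q 0) (q 3 - q 1) (v 0) (v 1) hr hα hab hkey
  -- step D : identify v explicitly
  have ht2 : ((q 2 - q 0)*v 0 + (q 3 - q 1)*v 1)^2 = 2*r^2 := by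
    linear_combination (v 0^2 + v 1^2)*hab + 4*r^2*hv12
      - ((q 2 - q 0)*v 1 - (q 3 - q 1)*v 0)*hcross
  have ht : (q 2 - q 0)*v 0 + (q 3 - q 1)*v 1 = η := by
    have h9 : ((q 2 - q 0)*v 0 + (q 3 - q 1)*v 1 - η)
        * ((q 2 - q 0)*v 0 + (q 3 - q 1)*v 1 + η) = 0 := by
      linear_combination ht2 - hη2
    rcases mul_eq_zero.mp h9 with h' | h'
    · linarith
    · exfalso; linarith
  have htimes : (q 2 - q 0) * ((q 2 - q 0)*v 0 + (q 3 - q 1)*v 1) = 4*r^2 * v 0 := by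
    linear_combination (q 3 - q 1)*hcross + v 0 * hab
  have htimesb : (q 3 - q 1) * ((q 2 - q 0)*v 0 + (q 3 - q 1)*v 1) = 4*r^2 * v 1 := by
    linear_combination (-(q 2 - q 0))*hcross + v 1 * hab
  rw [ht] at htimes htimesb
  have hva : q 2 - q 0 = 2*η*v 0 := by
    have h10 : η * ((q 2 - q 0) - 2*η*v 0) = 0 := by
      linear_combination htimes - 2*v 0*hη2
    rcases mul_eq_zero.mp h10 with h' | h'
    · exfalso; linarith
    · linarith
  have hvb : q 3 - q 1 = 2*η*v 1 := by
    have h10 : η * ((q 3 - q 1) - 2*η*v 1) = 0 := by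
      linear_combination htimesb - 2*v 1*hη2
    rcases mul_eq_zero.mp h10 with h' | h'
    · exfalso; linarith
    · linarith
  -- final step : the ball misses the set
  rw [Set.eq_empty_iff_forall_notMem]
  rintro y ⟨hyb, hyK⟩
  have hyK' : 4*r^2 ≤ (y 2 - y 0)^2 + (y 3 - y 1)^2 := by
    rw [hset r hr] at hyK; exact hyK
  have hd : dist y (q + η • v) < η := mem_ball.mp hyb
  rw [EuclideanSpace.dist_eq] at hd
  simp only [Real.dist_eq, sq_abs, Fin.sum_univ_four, PiLp.add_apply, PiLp.smul_apply,
    smul_eq_mul] at hd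
  have hSnn : (0:ℝ) ≤ (y 0 - (q 0 + η * v 0))^2 + (y 1 - (q 1 + η * v 1))^2
      + (y 2 - (q 2 + η * v 2))^2 + (y 3 - (q 3 + η * v 3))^2 := by positivity
  have hS : (y 0 - (q 0 + η * v 0))^2 + (y 1 - (q 1 + η * v 1))^2
      + (y 2 - (q 2 + η * v 2))^2 + (y 3 - (q 3 + η * v 3))^2 < 2*r^2 := by
    have h4 := mul_self_lt_mul_self (Real.sqrt_nonneg _) hd
    rw [Real.mul_self_sqrt hSnn] at h4
    exact h4.trans_eq (by rw [← hη2]; ring)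
  have hA2 : y 2 - y 0 = (y 2 - (q 2 + η * v 2)) - (y 0 - (q 0 + η * v 0)) := by
    rw [h02]; linarith
  have hB2 : y 3 - y 1 = (y 3 - (q 3 + η * v 3)) - (y 1 - (q 1 + η * v 1)) := by
    rw [h13]; linarith
  rw [hA2, hB2] at hyK'
  generalize hd0 : y 0 - (q 0 + η * v 0) = d0 at hS hyK'
  generalize hd1 : y 1 - (q 1 + η * v 1) = d1 at hS hyK'
  generalize hd2 : y 2 - (q 2 + η * v 2) = d2 at hS hyK'
  generalize hd3 : y 3 - (q 3 + η * v 3) = d3 at hS hyK'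
  linarith only [hyK', hS, sq_nonneg (d2 + d0), sq_nonneg (d3 + d1)]
end
end

section
/- In one dimension, the Dirac mass δ₀ at the origin has a unique closest point in quadratic Wasserstein distance among densities bounded by 1, namely the uniform density 𝟙_{(−1/2, 1/2)}, and the squared Wasserstein distance is W₂(δ₀, 𝟙_{(−1/2,1/2)})² = 1/12. -/
noncomputable section
open MeasureTheory

/-- The squared quadratic Wasserstein distance, as an infimum over couplings. -/
def W2sq {E : Type*} [MeasurableSpace E] [PseudoMetricSpace E]
    (μ ν : Measure E) : ENNReal :=
  sInf { c | ∃ γ : Measure (E × E), γ.map Prod.fst = μ ∧ γ.map Prod.snd = ν ∧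
    c = ∫⁻ p, ENNReal.ofReal (dist p.1 p.2 ^ 2) ∂γ }

/-- Probability measures on `ℝ` with density bounded by `1`. -/
def densLEone : Set (Measure ℝ) := {ν | IsProbabilityMeasure ν ∧ ν ≤ volume}

lemma W2sq_dirac (ν : Measure ℝ) [IsProbabilityMeasure ν] :
    W2sq (Measure.dirac (0 : ℝ)) ν = ∫⁻ y, ENNReal.ofReal (y ^ 2) ∂ν := by
  have hmeas : Measurable fun p : ℝ × ℝ => ENNReal.ofReal (dist p.1 p.2 ^ 2) :=
    ((measurable_fst.dist measurable_snd).pow_const 2).ennreal_ofReal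
  have hset : { c | ∃ γ : Measure (ℝ × ℝ), γ.map Prod.fst = Measure.dirac 0 ∧
      γ.map Prod.snd = ν ∧ c = ∫⁻ p, ENNReal.ofReal (dist p.1 p.2 ^ 2) ∂γ }
      = {∫⁻ y, ENNReal.ofReal (y ^ 2) ∂ν} := by
    ext c
    simp only [Set.mem_setOf_eq, Set.mem_singleton_iff]
    constructor
    · rintro ⟨γ, h1, h2, rfl⟩
      have hae : ∀ᵐ p ∂γ, p.1 = (0 : ℝ) := by
        have : γ.map Prod.fst {(0 : ℝ)}ᶜ = 0 := by
          rw [h1]; simp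
        rw [Measure.map_apply measurable_fst (measurableSet_singleton 0).compl] at this
        filter_upwards [measure_eq_zero_iff_ae_notMem.mp this] with p hp
        simpa using hp
      calc ∫⁻ p, ENNReal.ofReal (dist p.1 p.2 ^ 2) ∂γ
          = ∫⁻ p, ENNReal.ofReal (p.2 ^ 2) ∂γ := by
            refine lintegral_congr_ae ?_
            filter_upwards [hae] with p hp
            rw [hp, Real.dist_eq, zero_sub, abs_neg, sq_abs]
        _ = ∫⁻ y, ENNReal.ofReal (y ^ 2) ∂(γ.map Prod.snd) := by
            rw [lintegral_map (by fun_prop) measurable_snd]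
        _ = ∫⁻ y, ENNReal.ofReal (y ^ 2) ∂ν := by rw [h2]
    · rintro rfl
      refine ⟨(Measure.dirac (0 : ℝ)).prod ν, ?_, ?_, ?_⟩
      · rw [Measure.map_fst_prod]; simp
      · rw [Measure.map_snd_prod]; simp
      · rw [lintegral_prod _ hmeas.aemeasurable]
        rw [lintegral_dirac' _ (hmeas.lintegral_prod_right' (ν := ν))]
        refine (lintegral_congr fun y => ?_).symm
        rw [Real.dist_eq, zero_sub, abs_neg, sq_abs]
  rw [W2sq, hset, csInf_singleton]

lemma vol_I : volume (Set.Ioo (-(1/2) : ℝ) (1/2)) = 1 := by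
  rw [Real.volume_Ioo]; norm_num

lemma lint_unif :
    ∫⁻ y, ENNReal.ofReal (y ^ 2) ∂(volume.restrict (Set.Ioo (-(1/2) : ℝ) (1/2)))
      = ENNReal.ofReal (1/12) := by
  have hint : IntegrableOn (fun y : ℝ => y ^ 2) (Set.Ioo (-(1/2) : ℝ) (1/2)) :=
    (integrableOn_Ioc_iff_integrableOn_Ioo).mp ((continuous_pow 2).integrableOn_Ioc)
  rw [← ofReal_integral_eq_lintegral_ofReal hint
    (Filter.Eventually.of_forall fun y => sq_nonneg y)]
  congr 1
  rw [← MeasureTheory.integral_Ioc_eq_integral_Ioo,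
    ← intervalIntegral.integral_of_le (by norm_num : (-(1/2) : ℝ) ≤ 1/2)]
  rw [integral_pow]
  norm_num

lemma key (ν : Measure ℝ) (hp : IsProbabilityMeasure ν) (hle : ν ≤ volume) :
    (∫⁻ y, ENNReal.ofReal (y ^ 2) ∂(volume.restrict (Set.Ioo (-(1/2) : ℝ) (1/2))))
      ≤ ∫⁻ y, ENNReal.ofReal (y ^ 2) ∂ν ∧
    ((∫⁻ y, ENNReal.ofReal (y ^ 2) ∂ν) =
      (∫⁻ y, ENNReal.ofReal (y ^ 2) ∂(volume.restrict (Set.Ioo (-(1/2) : ℝ) (1/2)))) →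
      ν = volume.restrict (Set.Ioo (-(1/2) : ℝ) (1/2))) := by
  set I : Set ℝ := Set.Ioo (-(1/2) : ℝ) (1/2) with hIdef
  have hI : MeasurableSet I := measurableSet_Ioo
  set f : ℝ → ENNReal := fun y => ENNReal.ofReal (y ^ 2) with hfdef
  have hfm : Measurable f := (measurable_id.pow_const 2).ennreal_ofReal
  have hres : ν.restrict I ≤ volume.restrict I := Measure.restrict_mono subset_rfl hle
  set σ : Measure ℝ := volume.restrict I - ν.restrict I with hσdef
  have hsum : volume.restrict I = σ + ν.restrict I := (Measure.sub_add_cancel_of_le hres).symm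
  have hu : ∫⁻ y, f y ∂(volume.restrict I) = ∫⁻ y, f y ∂σ + ∫⁻ y, f y ∂(ν.restrict I) := by
    rw [hsum, lintegral_add_measure]
  have hν : ∫⁻ y, f y ∂ν = ∫⁻ y, f y ∂(ν.restrict I) + ∫⁻ y in Iᶜ, f y ∂ν :=
    (lintegral_add_compl f hI).symm
  have hσc : σ Iᶜ = 0 :=
    le_antisymm (le_trans (Measure.sub_le Iᶜ) (by simp [Measure.restrict_apply hI.compl]))
      zero_le
  have hσmem : ∀ᵐ y ∂σ, y ∈ I := by
    filter_upwards [measure_eq_zero_iff_ae_notMem.mp hσc] with y hy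
    simpa using hy
  have hσuniv : σ Set.univ = 1 - ν I := by
    rw [hσdef, Measure.sub_apply MeasurableSet.univ hres]
    simp only [Measure.restrict_apply_univ]
    rw [hIdef, vol_I]
  have hνIc : ν Iᶜ = 1 - ν I := by
    rw [measure_compl hI (measure_ne_top ν I)]
    simp
  have bound1 : ENNReal.ofReal (1/4) * ν Iᶜ ≤ ∫⁻ y in Iᶜ, f y ∂ν := by
    rw [← setLIntegral_const]
    refine setLIntegral_mono hfm fun y hy => ?_
    refine ENNReal.ofReal_le_ofReal ?_
    simp only [hIdef, Set.mem_compl_iff, Set.mem_Ioo, not_and_or, not_lt] at hy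
    rcases hy with h | h <;> nlinarith
  have bound2 : ∫⁻ y, f y ∂σ ≤ ENNReal.ofReal (1/4) * σ Set.univ := by
    calc ∫⁻ y, f y ∂σ ≤ ∫⁻ _, ENNReal.ofReal (1/4) ∂σ := by
          refine lintegral_mono_ae ?_
          filter_upwards [hσmem] with y hy
          refine ENNReal.ofReal_le_ofReal ?_
          simp only [hIdef, Set.mem_Ioo] at hy
          nlinarith [hy.1, hy.2]
      _ = ENNReal.ofReal (1/4) * σ Set.univ := lintegral_const _
  have hσν : σ Set.univ = ν Iᶜ := by rw [hσuniv, hνIc]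
  have hmain : ∫⁻ y, f y ∂(volume.restrict I) ≤ ∫⁻ y, f y ∂ν := by
    rw [hu, hν, add_comm (∫⁻ y, f y ∂σ)]
    exact add_le_add le_rfl (le_trans bound2 (hσν ▸ bound1))
  refine ⟨hmain, fun heq => ?_⟩
  -- Equality case
  have hfin_u : ∫⁻ y, f y ∂(volume.restrict I) ≠ ⊤ := by
    rw [lint_unif]; exact ENNReal.ofReal_ne_top
  have hfin_ν : ∫⁻ y, f y ∂ν ≠ ⊤ := by rw [heq]; exact hfin_u
  have hfin_I : ∫⁻ y, f y ∂(ν.restrict I) ≠ ⊤ := by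
    refine ne_top_of_le_ne_top hfin_ν (lintegral_mono' Measure.restrict_le_self le_rfl)
  have hcancel : ∫⁻ y in Iᶜ, f y ∂ν = ∫⁻ y, f y ∂σ := by
    have := heq.trans hu
    rw [hν, add_comm (∫⁻ y, f y ∂σ) _] at this
    exact (ENNReal.add_right_inj hfin_I).mp this
  have hσ0 : σ = 0 := by
    by_contra hσ0
    have hstrict : ∫⁻ y, f y ∂σ < ∫⁻ _, ENNReal.ofReal (1/4) ∂σ := by
      refine lintegral_strict_mono hσ0 aemeasurable_const ?_ ?_
      · refine ne_top_of_le_ne_top ?_ (le_of_eq hcancel.symm)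
        refine ne_top_of_le_ne_top hfin_ν (lintegral_mono' Measure.restrict_le_self le_rfl)
      · filter_upwards [hσmem] with y hy
        refine ENNReal.ofReal_lt_ofReal_iff (by norm_num) |>.mpr ?_
        simp only [hIdef, Set.mem_Ioo] at hy
        nlinarith [hy.1, hy.2]
    rw [lintegral_const, hσν] at hstrict
    exact absurd (lt_of_le_of_lt (hcancel ▸ bound1) hstrict) (lt_irrefl _)
  have hrestr_eq : volume.restrict I = ν.restrict I := by
    ext s hs
    have hsa : σ s = volume.restrict I s - ν.restrict I s := Measure.sub_apply hs hres
    rw [hσ0] at hsa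
    simp only [Measure.coe_zero, Pi.zero_apply] at hsa
    have hle2 : volume.restrict I s ≤ ν.restrict I s := tsub_eq_zero_iff_le.mp hsa.symm
    exact le_antisymm hle2 (hres s)
  have hνI : ν I = 1 := by
    have := congrArg (fun μ : Measure ℝ => μ Set.univ) hrestr_eq
    simp only [Measure.restrict_apply_univ] at this
    rw [hIdef, vol_I] at this
    exact this.symm
  have hνIc0 : ν Iᶜ = 0 := by rw [hνIc, hνI]; simp
  have : ν.restrict I = ν := by
    refine Measure.restrict_eq_self_of_ae_mem ?_
    filter_upwards [measure_eq_zero_iff_ae_notMem.mp hνIc0] with y hy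
    simpa using hy
  rw [hrestr_eq, this]

instance : IsProbabilityMeasure (volume.restrict (Set.Ioo (-(1/2) : ℝ) (1/2))) :=
  ⟨by rw [Measure.restrict_apply_univ, vol_I]⟩

/-- The Dirac mass at `0` has a unique `W₂`-closest point among densities bounded
by `1`, namely `𝟙_{(-1/2,1/2)}`, and the squared distance is `1/12`. -/
theorem dirac_projection_uniform :
    volume.restrict (Set.Ioo (-(1/2) : ℝ) (1/2)) ∈ densLEone ∧
    W2sq (Measure.dirac (0 : ℝ)) (volume.restrict (Set.Ioo (-(1/2) : ℝ) (1/2))) =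
      ENNReal.ofReal (1/12) ∧
    (∀ ν ∈ densLEone,
      W2sq (Measure.dirac (0 : ℝ)) (volume.restrict (Set.Ioo (-(1/2) : ℝ) (1/2))) ≤
        W2sq (Measure.dirac (0 : ℝ)) ν) ∧
    (∀ ν ∈ densLEone,
      W2sq (Measure.dirac (0 : ℝ)) ν =
        W2sq (Measure.dirac (0 : ℝ)) (volume.restrict (Set.Ioo (-(1/2) : ℝ) (1/2))) →
      ν = volume.restrict (Set.Ioo (-(1/2) : ℝ) (1/2))) := by
  refine ⟨⟨inferInstance, Measure.restrict_le_self⟩, ?_, ?_, ?_⟩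
  · rw [W2sq_dirac, lint_unif]
  · rintro ν ⟨hp, hle⟩
    haveI := hp
    rw [W2sq_dirac, W2sq_dirac]
    exact (key ν hp hle).1
  · rintro ν ⟨hp, hle⟩ heq
    haveI := hp
    rw [W2sq_dirac, W2sq_dirac] at heq
    exact (key ν hp hle).2 heq
end
end

section
/- Let μ = Σ_n α_n δ_{x_n} be a countable convex combination of Dirac masses on ℝ with Σα_n = 1, and suppose the intervals I_n = (x_n − α_n/2, x_n + α_n/2) are pairwise disjoint. Then the projection of μ in W₂ onto the set K of densities bounded by 1 is ρ = Σ_n 𝟙_{I_n}, and the squared distance is W₂(μ, ρ)² = (1/12) Σ_n α_n³. -/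
noncomputable section
open MeasureTheory
open scoped ENNReal

lemma auxIntegralA (c a k : ℝ) (ha : 0 ≤ a) (hk : 0 ≤ k) :
    ∫⁻ y in Set.Ioo (c - a / 2) (c + a / 2), ENNReal.ofReal ((y - c) ^ 2 + k) =
      ENNReal.ofReal (a ^ 3 / 12 + k * a) := by
  have hcont : Continuous fun y : ℝ => (y - c) ^ 2 + k := by continuity
  have hint : IntegrableOn (fun y : ℝ => (y - c) ^ 2 + k)
      (Set.Ioo (c - a / 2) (c + a / 2)) volume :=
    (hcont.locallyIntegrable.integrableOn_isCompact isCompact_Icc).mono_set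
      Set.Ioo_subset_Icc_self
  rw [← ofReal_integral_eq_lintegral_ofReal hint
    (Filter.Eventually.of_forall fun y => by positivity)]
  congr 1
  have hle : c - a / 2 ≤ c + a / 2 := by linarith
  rw [← MeasureTheory.integral_Ioc_eq_integral_Ioo,
    ← intervalIntegral.integral_of_le hle]
  rw [intervalIntegral.integral_comp_sub_right (fun z => z ^ 2 + k) c]
  have h1 : c - a / 2 - c = -(a / 2) := by ring
  have h2 : c + a / 2 - c = a / 2 := by ring
  rw [h1, h2, intervalIntegral.integral_add (intervalIntegral.intervalIntegrable_pow (n := 2))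
    intervalIntegrable_const, integral_pow, intervalIntegral.integral_const (a := -(a/2)) (b := a/2)]
  simp only [smul_eq_mul]
  ring

/-- A countable convex combination of Dirac masses whose flattened intervals are
pairwise disjoint projects (in `W₂`) onto the sum of their characteristic functions,
with squared distance `(1/12) Σ αₙ³`. -/
theorem dirac_sum_projection (α x : ℕ → ℝ)
    (hα : ∀ n, 0 < α n) (hsum : ∑' n, α n = 1)
    (hdisj : Pairwise (Function.onFun Disjoint
      fun n => Set.Ioo (x n - α n / 2) (x n + α n / 2))) :
    volume.restrict (⋃ n, Set.Ioo (x n - α n / 2) (x n + α n / 2)) ∈ densLEone ∧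
    (∀ ν ∈ densLEone,
      W2sq (Measure.sum fun n => ENNReal.ofReal (α n) • Measure.dirac (x n))
          (volume.restrict (⋃ n, Set.Ioo (x n - α n / 2) (x n + α n / 2))) ≤
        W2sq (Measure.sum fun n => ENNReal.ofReal (α n) • Measure.dirac (x n)) ν) ∧
    (∀ ν ∈ densLEone,
      W2sq (Measure.sum fun n => ENNReal.ofReal (α n) • Measure.dirac (x n)) ν =
        W2sq (Measure.sum fun n => ENNReal.ofReal (α n) • Measure.dirac (x n))
          (volume.restrict (⋃ n, Set.Ioo (x n - α n / 2) (x n + α n / 2))) →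
      ν = volume.restrict (⋃ n, Set.Ioo (x n - α n / 2) (x n + α n / 2))) ∧
    W2sq (Measure.sum fun n => ENNReal.ofReal (α n) • Measure.dirac (x n))
        (volume.restrict (⋃ n, Set.Ioo (x n - α n / 2) (x n + α n / 2))) =
      ENNReal.ofReal ((∑' n, (α n) ^ 3) / 12) := by
  set I : ℕ → Set ℝ := fun n => Set.Ioo (x n - α n / 2) (x n + α n / 2) with hIdef
  set U : Set ℝ := ⋃ n, I n with hUdef
  set μ : Measure ℝ := Measure.sum fun n => ENNReal.ofReal (α n) • Measure.dirac (x n) with hμdef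
  set ρ : Measure ℝ := volume.restrict U with hρdef
  -- basic facts about α
  have hα0 : ∀ n, 0 ≤ α n := fun n => (hα n).le
  have hαs : Summable α := by
    by_contra h
    rw [tsum_eq_zero_of_not_summable h] at hsum
    exact one_ne_zero hsum.symm
  have hα1 : ∀ n, α n ≤ 1 := by
    intro n
    rw [← hsum]
    exact Summable.le_tsum hαs n fun m _ => hα0 m
  have hcube_le : ∀ n, α n ^ 3 ≤ α n := by
    intro n
    calc α n ^ 3 ≤ α n ^ 1 := pow_le_pow_of_le_one (hα0 n) (hα1 n) (by norm_num)
    _ = α n := pow_one _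
  have hcube0 : ∀ n, 0 ≤ α n ^ 3 := fun n => pow_nonneg (hα0 n) 3
  have hcubes : Summable (fun n => α n ^ 3) := hαs.of_nonneg_of_le hcube0 hcube_le
  have hcube_sum_le : ∑' n, α n ^ 3 ≤ 1 := by
    rw [← hsum]; exact Summable.tsum_le_tsum hcube_le hcubes hαs
  have hcube_sum_0 : 0 ≤ ∑' n, α n ^ 3 := tsum_nonneg hcube0
  -- basic facts about the intervals
  have hImeas : ∀ n, MeasurableSet (I n) := fun n => measurableSet_Ioo
  have hIvol : ∀ n, volume (I n) = ENNReal.ofReal (α n) := by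
    intro n
    rw [hIdef]
    rw [Real.volume_Ioo]
    congr 1
    ring
  have hxI : ∀ n, x n ∈ I n := fun n => ⟨by linarith [hα n], by linarith [hα n]⟩
  have hinj : Function.Injective x := by
    intro n m h
    by_contra hnm
    exact Set.disjoint_left.mp (hdisj hnm) (hxI n) (h ▸ hxI m)
  have hUmeas : MeasurableSet U := MeasurableSet.iUnion hImeas
  have hUvol : volume U = 1 := by
    rw [hUdef, measure_iUnion hdisj hImeas]
    simp_rw [hIvol]
    rw [← ENNReal.ofReal_tsum_of_nonneg hα0 hαs, hsum, ENNReal.ofReal_one]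
  have hρprob : IsProbabilityMeasure ρ := by
    constructor
    rw [hρdef, Measure.restrict_apply_univ, hUvol]
  have hρle : ρ ≤ volume := Measure.restrict_le_self
  have part1 : ρ ∈ densLEone := ⟨hρprob, hρle⟩
  have hρsum : ρ = Measure.sum fun n => volume.restrict (I n) :=
    Measure.restrict_iUnion hdisj hImeas
  have hμuniv : μ Set.univ = 1 := by
    rw [hμdef, Measure.sum_apply _ MeasurableSet.univ]
    simp only [Measure.smul_apply, measure_univ, smul_eq_mul, mul_one]
    rw [← ENNReal.ofReal_tsum_of_nonneg hα0 hαs, hsum, ENNReal.ofReal_one]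
  -- the dual potential Ψ and its complement W
  set Ψ : ℝ → ℝ≥0∞ :=
    fun y => ⨅ n, ENNReal.ofReal ((y - x n) ^ 2 - α n ^ 2 / 4 + 1 / 4) with hΨdef
  have hterm0 : ∀ n (y : ℝ), 0 ≤ (y - x n) ^ 2 - α n ^ 2 / 4 + 1 / 4 := by
    intro n y
    nlinarith [sq_nonneg (y - x n), hα1 n, hα n]
  have hΨmeas : Measurable Ψ := by
    apply Measurable.iInf
    intro n
    exact (measurable_id.sub measurable_const).pow_const 2
      |>.sub measurable_const |>.add measurable_const |>.ennreal_ofReal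
  have hΨle : ∀ n y, Ψ y ≤ ENNReal.ofReal ((y - x n) ^ 2 - α n ^ 2 / 4 + 1 / 4) :=
    fun n y => iInf_le _ n
  have hsq_off : ∀ n, ∀ y ∉ I n, α n ^ 2 / 4 ≤ (y - x n) ^ 2 := by
    intro n y hy
    rw [hIdef] at hy
    simp only [Set.mem_Ioo, not_and_or, not_lt] at hy
    rcases hy with h | h
    · have h1 : α n / 2 ≤ x n - y := by linarith
      calc α n ^ 2 / 4 = (α n / 2) ^ 2 := by ring
      _ ≤ (x n - y) ^ 2 := pow_le_pow_left₀ (by linarith [hα n]) h1 2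
      _ = (y - x n) ^ 2 := by ring
    · have h1 : α n / 2 ≤ y - x n := by linarith
      calc α n ^ 2 / 4 = (α n / 2) ^ 2 := by ring
      _ ≤ (y - x n) ^ 2 := pow_le_pow_left₀ (by linarith [hα n]) h1 2
  have hΨoffU : ∀ y ∉ U, ENNReal.ofReal (1 / 4) ≤ Ψ y := by
    intro y hy
    apply le_iInf
    intro n
    have hyn : y ∉ I n := fun h => hy (Set.mem_iUnion.mpr ⟨n, h⟩)
    exact ENNReal.ofReal_le_ofReal (by linarith [hsq_off n y hyn])
  have hsq_on : ∀ n, ∀ y ∈ I n, (y - x n) ^ 2 < α n ^ 2 / 4 := by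
    intro n y hy
    rw [hIdef] at hy
    obtain ⟨h1, h2⟩ := hy
    nlinarith
  have hΨonI : ∀ m, ∀ y ∈ I m,
      Ψ y = ENNReal.ofReal ((y - x m) ^ 2 - α m ^ 2 / 4 + 1 / 4) := by
    intro m y hy
    refine le_antisymm (hΨle m y) (le_iInf fun n => ?_)
    rcases eq_or_ne n m with rfl | hnm
    · exact le_rfl
    · have hyn : y ∉ I n := Set.disjoint_left.mp (hdisj hnm.symm) hy
      calc ENNReal.ofReal ((y - x m) ^ 2 - α m ^ 2 / 4 + 1 / 4)
          ≤ ENNReal.ofReal (1 / 4) :=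
            ENNReal.ofReal_le_ofReal (by linarith [hsq_on m y hy])
      _ ≤ ENNReal.ofReal ((y - x n) ^ 2 - α n ^ 2 / 4 + 1 / 4) :=
            ENNReal.ofReal_le_ofReal (by linarith [hsq_off n y hyn])
  have hΨU_le : ∀ y ∈ U, Ψ y ≤ ENNReal.ofReal (1 / 4) := by
    intro y hy
    obtain ⟨m, hm⟩ := Set.mem_iUnion.mp hy
    rw [hΨonI m y hm]
    exact ENNReal.ofReal_le_ofReal (by linarith [hsq_on m y hm])
  set W : ℝ → ℝ≥0∞ := fun y => ENNReal.ofReal (1 / 4) - Ψ y with hWdef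
  have hWmeas : Measurable W := measurable_const.sub hΨmeas
  have hW0 : ∀ y ∉ U, W y = 0 := fun y hy => tsub_eq_zero_of_le (hΨoffU y hy)
  have hWle : ∀ y, W y ≤ ENNReal.ofReal (1 / 4) := fun y => tsub_le_self
  have hWpos : ∀ m, ∀ y ∈ I m, 0 < W y := by
    intro m y hy
    rw [hWdef]
    simp only
    rw [hΨonI m y hy]
    rw [← ENNReal.ofReal_sub _ (hterm0 m y)]
    apply ENNReal.ofReal_pos.mpr
    nlinarith [hsq_on m y hy]
  have hΨWU : ∀ y ∈ U, Ψ y + W y = ENNReal.ofReal (1 / 4) := fun y hy =>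
    add_tsub_cancel_of_le (hΨU_le y hy)
  have hΨW_ge : ∀ y, ENNReal.ofReal (1 / 4) ≤ Ψ y + W y := fun y => le_add_tsub
  -- integrals against ρ
  have hΨρ : ∫⁻ y, Ψ y ∂ρ = ENNReal.ofReal (1 / 4 - (∑' n, α n ^ 3) / 6) := by
    have hterm : ∀ n, ∫⁻ y in I n, Ψ y ∂volume =
        ENNReal.ofReal (α n / 4 - α n ^ 3 / 6) := by
      intro n
      have hcongr : ∫⁻ y in I n, Ψ y ∂volume =
          ∫⁻ y in I n, ENNReal.ofReal ((y - x n) ^ 2 + (1 / 4 - α n ^ 2 / 4)) ∂volume := by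
        refine setLIntegral_congr_fun (hImeas n)
          (fun y hy => ?_)
        rw [hΨonI n y hy]
        congr 1
        ring
      rw [hcongr, hIdef, auxIntegralA (x n) (α n) _ (hα0 n)
        (by nlinarith [hα1 n, hα n])]
      congr 1
      ring
    rw [hρsum, lintegral_sum_measure]
    simp_rw [hterm]
    have hsub_nonneg : ∀ n, 0 ≤ α n / 4 - α n ^ 3 / 6 := by
      intro n
      have := hcube_le n
      linarith [hα0 n]
    have hsubsum : Summable fun n => α n / 4 - α n ^ 3 / 6 :=
      (hαs.div_const 4).sub (hcubes.div_const 6)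
    rw [← ENNReal.ofReal_tsum_of_nonneg hsub_nonneg hsubsum]
    congr 1
    rw [Summable.tsum_sub (hαs.div_const 4) (hcubes.div_const 6),
      tsum_div_const, tsum_div_const, hsum]
  have hΨρ_ne_top : ∫⁻ y, Ψ y ∂ρ ≠ ⊤ := by rw [hΨρ]; exact ENNReal.ofReal_ne_top
  have hWvol : ∫⁻ y, W y ∂volume = ∫⁻ y, W y ∂ρ := by
    rw [hρdef, ← lintegral_indicator hUmeas]
    congr 1
    funext y
    by_cases hy : y ∈ U
    · rw [Set.indicator_of_mem hy]
    · rw [Set.indicator_of_notMem hy, hW0 y hy]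
  have hΨWρ : ∫⁻ y, Ψ y ∂ρ + ∫⁻ y, W y ∂ρ = ENNReal.ofReal (1 / 4) := by
    rw [← lintegral_add_left hΨmeas, hρdef]
    rw [setLIntegral_congr_fun hUmeas
      (fun y hy => hΨWU y hy)]
    rw [setLIntegral_const, hUvol, mul_one]
  have hWρ_ne_top : ∫⁻ y, W y ∂ρ ≠ ⊤ := by
    intro h
    rw [h] at hΨWρ
    simp at hΨWρ
    exact ENNReal.inv_ne_top.mpr (by norm_num) hΨWρ.symm
  -- bathtub inequality
  have hquarter : ∀ (ν : Measure ℝ), IsProbabilityMeasure ν →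
      ENNReal.ofReal (1 / 4) ≤ ∫⁻ y, Ψ y ∂ν + ∫⁻ y, W y ∂ν := by
    intro ν hν
    rw [← lintegral_add_left hΨmeas]
    calc ENNReal.ofReal (1 / 4) = ∫⁻ _, ENNReal.ofReal (1 / 4) ∂ν := by
          rw [lintegral_const, measure_univ, mul_one]
    _ ≤ _ := lintegral_mono fun y => hΨW_ge y
  have hWνρ : ∀ (ν : Measure ℝ), ν ≤ volume → ∫⁻ y, W y ∂ν ≤ ∫⁻ y, W y ∂ρ := by
    intro ν hν
    rw [← hWvol]
    exact lintegral_mono' hν le_rfl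
  have hbathtub : ∀ (ν : Measure ℝ), IsProbabilityMeasure ν → ν ≤ volume →
      ∫⁻ y, Ψ y ∂ρ ≤ ∫⁻ y, Ψ y ∂ν := by
    intro ν hν hνle
    have h1 := hquarter ν hν
    have h2 := hWνρ ν hνle
    have : ∫⁻ y, Ψ y ∂ρ + ∫⁻ y, W y ∂ρ ≤ ∫⁻ y, Ψ y ∂ν + ∫⁻ y, W y ∂ρ := by
      rw [hΨWρ]
      exact le_trans h1 (add_le_add_right h2 _)
    exact ENNReal.le_of_add_le_add_right hWρ_ne_top this
  -- the atomic part of the potential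
  set Φ : ℝ → ℝ≥0∞ :=
    fun z => ∑' n, Set.indicator {x n} (fun _ => ENNReal.ofReal (α n ^ 2 / 4)) z with hΦdef
  have hΦmeas : Measurable Φ :=
    Measurable.ennreal_tsum fun n =>
      measurable_const.indicator (measurableSet_singleton _)
  have hΦx : ∀ m, Φ (x m) = ENNReal.ofReal (α m ^ 2 / 4) := by
    intro m
    rw [hΦdef]
    simp only
    rw [tsum_eq_single m]
    · simp
    · intro n hnm
      apply Set.indicator_of_notMem
      simp only [Set.mem_singleton_iff]
      exact fun h => hnm (hinj h.symm)
  have hΦμ : ∫⁻ z, Φ z ∂μ = ENNReal.ofReal ((∑' n, α n ^ 3) / 4) := by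
    rw [hμdef, lintegral_sum_measure]
    have hterm : ∀ n, ∫⁻ z, Φ z ∂(ENNReal.ofReal (α n) • Measure.dirac (x n)) =
        ENNReal.ofReal (α n ^ 3 / 4) := by
      intro n
      rw [lintegral_smul_measure, lintegral_dirac' _ hΦmeas, hΦx n, smul_eq_mul,
        ← ENNReal.ofReal_mul (hα0 n)]
      congr 1
      ring
    simp_rw [hterm]
    rw [← ENNReal.ofReal_tsum_of_nonneg (fun n => div_nonneg (hcube0 n) (by norm_num)) (hcubes.div_const 4)]
    congr 1
    rw [tsum_div_const]
  have hΦμ_ne_top : ∫⁻ z, Φ z ∂μ ≠ ⊤ := by rw [hΦμ]; exact ENNReal.ofReal_ne_top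
  -- the dual lower bound
  have hdual : ∀ (ν : Measure ℝ), IsProbabilityMeasure ν → ν ≤ volume →
      ENNReal.ofReal ((∑' n, α n ^ 3) / 4) + ∫⁻ y, Ψ y ∂ν ≤
        W2sq μ ν + ENNReal.ofReal (1 / 4) := by
    intro ν hν1 hν2
    have hkey2 : ∀ c ∈ { c | ∃ γ : Measure (ℝ × ℝ), γ.map Prod.fst = μ ∧
        γ.map Prod.snd = ν ∧ c = ∫⁻ p, ENNReal.ofReal (dist p.1 p.2 ^ 2) ∂γ },
        ENNReal.ofReal ((∑' n, α n ^ 3) / 4) + ∫⁻ y, Ψ y ∂ν ≤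
          c + ENNReal.ofReal (1 / 4) := by
      rintro c ⟨γ, hfst, hsnd, rfl⟩
      have hγuniv : γ Set.univ = 1 := by
        have h := congrArg (fun m : Measure ℝ => m Set.univ) hfst
        simp only [Measure.map_apply measurable_fst MeasurableSet.univ,
          Set.preimage_univ, hμuniv] at h
        exact h
      have hrange : MeasurableSet (Set.range x) := (Set.countable_range x).measurableSet
      have hae : ∀ᵐ p ∂γ, p.1 ∈ Set.range x := by
        rw [ae_iff]
        have hpre : {p : ℝ × ℝ | ¬ p.1 ∈ Set.range x} = Prod.fst ⁻¹' (Set.range x)ᶜ := rfl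
        rw [hpre, ← Measure.map_apply measurable_fst hrange.compl, hfst, hμdef]
        rw [Measure.sum_apply _ hrange.compl]
        have hz : ∀ n, (ENNReal.ofReal (α n) • Measure.dirac (x n)) (Set.range x)ᶜ = 0 := by
          intro n
          simp only [Measure.smul_apply, smul_eq_mul]
          rw [Measure.dirac_apply' _ hrange.compl]
          rw [Set.indicator_of_notMem (by simp [Set.mem_range_self]), mul_zero]
        simp [hz]
      have hmono : ∫⁻ p, (Φ p.1 + Ψ p.2) ∂γ ≤
          ∫⁻ p, ENNReal.ofReal (dist p.1 p.2 ^ 2 + 1 / 4) ∂γ := by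
        refine lintegral_mono_ae (hae.mono fun p hp => ?_)
        obtain ⟨n, hn⟩ := hp
        rw [← hn, hΦx n]
        calc ENNReal.ofReal (α n ^ 2 / 4) + Ψ p.2
            ≤ ENNReal.ofReal (α n ^ 2 / 4) +
              ENNReal.ofReal ((p.2 - x n) ^ 2 - α n ^ 2 / 4 + 1 / 4) :=
              add_le_add_right (hΨle n p.2) _
        _ = ENNReal.ofReal (dist (x n) p.2 ^ 2 + 1 / 4) := by
              rw [← ENNReal.ofReal_add (by positivity) (hterm0 n p.2)]
              congr 1
              rw [Real.dist_eq, sq_abs]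
              ring
      have hleft : ∫⁻ p, (Φ p.1 + Ψ p.2) ∂γ = ∫⁻ z, Φ z ∂μ + ∫⁻ y, Ψ y ∂ν := by
        rw [lintegral_add_left (show Measurable fun p : ℝ × ℝ => Φ p.1 from hΦmeas.comp measurable_fst), ← hfst, ← hsnd,
          lintegral_map hΦmeas measurable_fst, lintegral_map hΨmeas measurable_snd]
      have hright : ∫⁻ p, ENNReal.ofReal (dist p.1 p.2 ^ 2 + 1 / 4) ∂γ =
          (∫⁻ p, ENNReal.ofReal (dist p.1 p.2 ^ 2) ∂γ) + ENNReal.ofReal (1 / 4) := by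
        have hsplit : ∀ p : ℝ × ℝ, ENNReal.ofReal (dist p.1 p.2 ^ 2 + 1 / 4) =
            ENNReal.ofReal (dist p.1 p.2 ^ 2) + ENNReal.ofReal (1 / 4) := fun p =>
          ENNReal.ofReal_add (by positivity) (by norm_num)
        simp_rw [hsplit]
        rw [lintegral_add_right _ measurable_const, lintegral_const, hγuniv, mul_one]
      calc ENNReal.ofReal ((∑' n, α n ^ 3) / 4) + ∫⁻ y, Ψ y ∂ν
          = ∫⁻ p, (Φ p.1 + Ψ p.2) ∂γ := by rw [hleft, hΦμ]
      _ ≤ ∫⁻ p, ENNReal.ofReal (dist p.1 p.2 ^ 2 + 1 / 4) ∂γ := hmono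
      _ = (∫⁻ p, ENNReal.ofReal (dist p.1 p.2 ^ 2) ∂γ) + ENNReal.ofReal (1 / 4) := hright
    have h3 : ENNReal.ofReal ((∑' n, α n ^ 3) / 4) + (∫⁻ y, Ψ y ∂ν) -
        ENNReal.ofReal (1 / 4) ≤ W2sq μ ν :=
      le_sInf fun c hc => tsub_le_iff_right.mpr (hkey2 c hc)
    exact tsub_le_iff_right.mp h3
  -- value of the dual at ρ
  have hkey : ENNReal.ofReal ((∑' n, α n ^ 3) / 4) + ∫⁻ y, Ψ y ∂ρ =
      ENNReal.ofReal ((∑' n, α n ^ 3) / 12) + ENNReal.ofReal (1 / 4) := by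
    rw [hΨρ, ← ENNReal.ofReal_add (by linarith) (by linarith),
      ← ENNReal.ofReal_add (by linarith) (by norm_num)]
    congr 1
    ring
  have hlower : ∀ ν ∈ densLEone,
      ENNReal.ofReal ((∑' n, α n ^ 3) / 12) ≤ W2sq μ ν := by
    intro ν hν
    obtain ⟨hν1, hν2⟩ := hν
    have h1 := hdual ν hν1 hν2
    have h2 : ENNReal.ofReal ((∑' n, α n ^ 3) / 12) + ENNReal.ofReal (1 / 4) ≤
        W2sq μ ν + ENNReal.ofReal (1 / 4) := by
      rw [← hkey]
      exact le_trans (add_le_add_right (hbathtub ν hν1 hν2) _) h1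
    exact ENNReal.le_of_add_le_add_right ENNReal.ofReal_ne_top h2
  have hupper : W2sq μ ρ ≤ ENNReal.ofReal ((∑' n, α n ^ 3) / 12) := by
    set γ : Measure (ℝ × ℝ) :=
      Measure.sum fun n => (Measure.dirac (x n)).prod (volume.restrict (I n)) with hγdef
    have hmeas_cost : Measurable fun p : ℝ × ℝ => ENNReal.ofReal (dist p.1 p.2 ^ 2) :=
      ((measurable_fst.dist measurable_snd).pow_const 2).ennreal_ofReal
    have hfst : γ.map Prod.fst = μ := by
      rw [hγdef, Measure.map_sum measurable_fst.aemeasurable, hμdef]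
      congr 1
      funext n
      rw [Measure.map_fst_prod, Measure.restrict_apply_univ, hIvol n]
    have hsnd : γ.map Prod.snd = ρ := by
      rw [hγdef, Measure.map_sum measurable_snd.aemeasurable, hρsum]
      congr 1
      funext n
      rw [Measure.map_snd_prod]
      simp
    have hterm : ∀ n, ∫⁻ p, ENNReal.ofReal (dist p.1 p.2 ^ 2)
        ∂((Measure.dirac (x n)).prod (volume.restrict (I n))) =
        ENNReal.ofReal (α n ^ 3 / 12) := by
      intro n
      rw [Measure.dirac_prod, lintegral_map hmeas_cost measurable_prodMk_left]
      have hcongr : ∫⁻ y in I n, ENNReal.ofReal (dist ((x n, y) : ℝ × ℝ).1 (x n, y).2 ^ 2) ∂volume =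
          ∫⁻ y in I n, ENNReal.ofReal ((y - x n) ^ 2 + 0) ∂volume := by
        refine setLIntegral_congr_fun (hImeas n)
          (fun y hy => ?_)
        congr 1
        rw [Real.dist_eq, sq_abs]
        ring
      rw [hcongr, hIdef, auxIntegralA (x n) (α n) 0 (hα0 n) le_rfl]
      congr 1
      ring
    have hcost : ∫⁻ p, ENNReal.ofReal (dist p.1 p.2 ^ 2) ∂γ =
        ENNReal.ofReal ((∑' n, α n ^ 3) / 12) := by
      rw [hγdef, lintegral_sum_measure]
      simp_rw [hterm]
      rw [← ENNReal.ofReal_tsum_of_nonneg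
        (fun n => div_nonneg (hcube0 n) (by norm_num)) (hcubes.div_const 12), tsum_div_const]
    exact sInf_le ⟨γ, hfst, hsnd, hcost.symm⟩
  have hW2ρ : W2sq μ ρ = ENNReal.ofReal ((∑' n, α n ^ 3) / 12) :=
    le_antisymm hupper (hlower ρ part1)
  refine ⟨part1, ?_, ?_, hW2ρ⟩
  · intro ν hν
    rw [hW2ρ]
    exact hlower ν hν
  · intro ν hν heq
    rw [hW2ρ] at heq
    obtain ⟨hν1, hν2⟩ := hν
    -- equality forces equality of the Ψ-integrals
    have hΨeq : ∫⁻ y, Ψ y ∂ν = ∫⁻ y, Ψ y ∂ρ := by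
      refine le_antisymm ?_ (hbathtub ν hν1 hν2)
      have h1 := hdual ν hν1 hν2
      rw [heq, ← hkey] at h1
      exact ENNReal.le_of_add_le_add_left ENNReal.ofReal_ne_top h1
    have hΨν_ne_top : ∫⁻ y, Ψ y ∂ν ≠ ⊤ := by rw [hΨeq]; exact hΨρ_ne_top
    -- hence equality of the W-integrals
    have hWeq : ∫⁻ y, W y ∂ν = ∫⁻ y, W y ∂ρ := by
      refine le_antisymm (hWνρ ν hν2) ?_
      have h1 := hquarter ν hν1
      rw [← hΨWρ, hΨeq] at h1
      exact ENNReal.le_of_add_le_add_left hΨρ_ne_top h1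
    -- Radon–Nikodym derivative of ν
    have hac : ν ≪ volume := Measure.absolutelyContinuous_of_le hν2
    haveI := hν1
    set f : ℝ → ℝ≥0∞ := ν.rnDeriv volume with hfdef
    have hfmeas : Measurable f := Measure.measurable_rnDeriv ν volume
    have hνd : volume.withDensity f = ν := Measure.withDensity_rnDeriv_eq ν volume hac
    have hf_le : f ≤ᵐ[volume] 1 := Measure.rnDeriv_le_one_of_le hν2
    have hWf : ∫⁻ y, f y * W y ∂volume = ∫⁻ y, W y ∂ν := by
      conv_rhs => rw [← hνd]
      rw [lintegral_withDensity_eq_lintegral_mul volume hfmeas hWmeas]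
      rfl
    have hWνfin : ∫⁻ y, f y * W y ∂volume ≠ ⊤ := by
      rw [hWf, hWeq]
      exact hWρ_ne_top
    have hfW_le : (fun y => f y * W y) ≤ᵐ[volume] W := hf_le.mono fun y hy => by
      calc f y * W y ≤ 1 * W y := mul_le_mul_left hy _
      _ = W y := one_mul _
    have hsub : ∫⁻ y, (W y - f y * W y) ∂volume = 0 := by
      have hls := lintegral_sub (hfmeas.mul hWmeas) hWνfin hfW_le
      simp only [Pi.mul_apply] at hls
      rw [hls, hWf, hWvol, hWeq, tsub_self]
    have hae0 : ∀ᵐ y ∂volume, W y - f y * W y = 0 :=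
      (lintegral_eq_zero_iff (hWmeas.sub (hfmeas.mul hWmeas))).mp hsub
    -- f = 1 a.e. on U
    have hfU : ∀ᵐ y ∂volume, y ∈ U → f y = 1 := by
      filter_upwards [hae0, hf_le] with y h1 h2
      intro hyU
      obtain ⟨m, hm⟩ := Set.mem_iUnion.mp hyU
      have hWy : 0 < W y := hWpos m y hm
      have hWtop : W y ≠ ⊤ := fun h => by
        have := hWle y
        rw [h] at this
        exact ENNReal.ofReal_ne_top (top_le_iff.mp this)
      have hle' : W y ≤ f y * W y := tsub_eq_zero_iff_le.mp h1
      have heq' : f y * W y = 1 * W y := by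
        rw [one_mul]
        exact le_antisymm (by calc f y * W y ≤ 1 * W y := mul_le_mul_left h2 _
                                _ = W y := one_mul _) hle'
      exact (ENNReal.mul_left_inj hWy.ne' hWtop).mp heq'
    -- ν(U) = 1, hence ν(Uᶜ) = 0
    have hνU : ν U = 1 := by
      rw [← hνd, withDensity_apply f hUmeas]
      rw [setLIntegral_congr_fun_ae hUmeas hfU]
      simp [hUvol]
    have hνUc : ∫⁻ y in Uᶜ, f y ∂volume = 0 := by
      have h1 : ν U + ν Uᶜ = 1 := by rw [measure_add_measure_compl hUmeas, measure_univ]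
      rw [hνU] at h1
      have h2 : ν Uᶜ = 0 := by
        have := (ENNReal.add_right_inj ENNReal.one_ne_top).mp
          (by rw [h1, add_zero] : (1 : ℝ≥0∞) + ν Uᶜ = 1 + 0)
        exact this
      rw [← withDensity_apply f hUmeas.compl, hνd, h2]
    have hf0 : ∀ᵐ y ∂volume, y ∈ Uᶜ → f y = 0 := by
      exact (setLIntegral_eq_zero_iff hUmeas.compl hfmeas).mp hνUc
    have hcomb : f =ᵐ[volume] Set.indicator U 1 := by
      filter_upwards [hfU, hf0] with y h1 h0
      by_cases hy : y ∈ U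
      · rw [Set.indicator_of_mem hy, h1 hy]
        rfl
      · rw [Set.indicator_of_notMem hy, h0 hy]
    rw [← hνd, withDensity_congr_ae hcomb, withDensity_indicator_one hUmeas, hρdef]
end
end

section
/- Let ρ be a probability density on ℝ with 0 ≤ ρ ≤ 1 a.e. whose saturated set {ρ = 1} contains no open interval (e.g. ρ is the characteristic function of the complement in (−1,1) of a dense open set of measure 1). Then ρ is the W₂-projection onto K = {0 ≤ ρ' ≤ 1} only of itself: no measure μ ≠ ρ with μ ∉ K satisfies P_K(μ) = ρ. Equivalently, if P_K(μ) = ρ then μ = ρ. -/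
noncomputable section
open MeasureTheory

section W2aux
open Set Filter
open scoped Topology ENNReal

set_option linter.unusedSectionVars false

namespace W2proof


/-- Quantile function of a probability measure on ℝ (junk value 0 outside `(0,1)`). -/
def qf (P : Measure ℝ) (u : ℝ) : ℝ :=
  if u ∈ Set.Ioo (0:ℝ) 1 then sInf {x | u ≤ ProbabilityTheory.cdf P x} else 0

variable {P : Measure ℝ} [IsProbabilityMeasure P]

lemma qf_set_nonempty {u : ℝ} (hu : u < 1) :
    {x | u ≤ ProbabilityTheory.cdf P x}.Nonempty := by
  have h := ProbabilityTheory.tendsto_cdf_atTop P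
  have : ∀ᶠ x in atTop, u ≤ ProbabilityTheory.cdf P x :=
    h.eventually_const_le hu
  exact this.exists

lemma qf_set_bddBelow {u : ℝ} (hu : 0 < u) :
    BddBelow {x | u ≤ ProbabilityTheory.cdf P x} := by
  have h := ProbabilityTheory.tendsto_cdf_atBot P
  have : ∀ᶠ x in atBot, ProbabilityTheory.cdf P x < u := h.eventually_lt_const hu
  obtain ⟨z, hz⟩ := this.exists
  refine ⟨z, fun x hx => ?_⟩
  by_contra hlt
  push_neg at hlt
  exact absurd (le_trans hx (ProbabilityTheory.monotone_cdf P hlt.le)) (not_le.mpr hz)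

lemma qf_le_iff {u x : ℝ} (hu : u ∈ Set.Ioo (0:ℝ) 1) :
    qf P u ≤ x ↔ u ≤ ProbabilityTheory.cdf P x := by
  rw [qf, if_pos hu]
  constructor
  · intro hle
    -- right continuity
    have hseq : Tendsto (fun n : ℕ => ProbabilityTheory.cdf P (x + 1/(n+1))) atTop
        (𝓝 (ProbabilityTheory.cdf P x)) := by
      have hc : ContinuousWithinAt (ProbabilityTheory.cdf P) (Set.Ici x) x :=
        (ProbabilityTheory.cdf P).right_continuous x
      have hx : Tendsto (fun n : ℕ => x + 1/(n+1 : ℝ)) atTop (𝓝[Set.Ici x] x) := by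
        rw [tendsto_nhdsWithin_iff]
        constructor
        · have := tendsto_one_div_add_atTop_nhds_zero_nat (𝕜 := ℝ)
          have h2 : Tendsto (fun n : ℕ => x + 1/(n+1 : ℝ)) atTop (𝓝 (x + 0)) :=
            tendsto_const_nhds.add this
          simpa using h2
        · filter_upwards with n
          have : (0:ℝ) < 1/(n+1 : ℝ) := by positivity
          exact mem_Ici.mpr (by linarith)
      exact hc.tendsto.comp hx
    refine ge_of_tendsto hseq ?_
    filter_upwards with n
    have hpos : (0:ℝ) < 1/(n+1 : ℝ) := by positivity
    have : sInf {x | u ≤ ProbabilityTheory.cdf P x} < x + 1/(n+1 : ℝ) := by linarith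
    obtain ⟨a, ha, halt⟩ := (csInf_lt_iff (qf_set_bddBelow hu.1) (qf_set_nonempty hu.2)).mp this
    exact le_trans ha (ProbabilityTheory.monotone_cdf P halt.le)
  · intro hle
    exact csInf_le (qf_set_bddBelow hu.1) hle

lemma measurable_qf : Measurable (qf P) := by
  apply measurable_of_Iic
  intro c
  have : qf P ⁻¹' Set.Iic c =
      (Set.Ioo (0:ℝ) 1 ∩ Set.Iic (ProbabilityTheory.cdf P c)) ∪
        ((Set.Ioo (0:ℝ) 1)ᶜ ∩ {u | (0:ℝ) ≤ c}) := by
    ext u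
    simp only [Set.mem_preimage, Set.mem_Iic, Set.mem_union, Set.mem_inter_iff, Set.mem_compl_iff,
      Set.mem_setOf_eq]
    by_cases hu : u ∈ Set.Ioo (0:ℝ) 1
    · simp only [hu, not_true_eq_false, false_and, or_false, true_and]
      exact qf_le_iff hu
    · simp only [hu, false_and, false_or, not_false_eq_true, true_and]
      rw [qf, if_neg hu]
  rw [this]
  refine MeasurableSet.union (measurableSet_Ioo.inter measurableSet_Iic) ?_
  by_cases h : (0:ℝ) ≤ c
  · simp only [h]
    refine measurableSet_Ioo.compl.inter ?_
    simp only [Set.setOf_true]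
    exact MeasurableSet.univ
  · have : {u : ℝ | (0:ℝ) ≤ c} = ∅ := by
      ext u; simp [h]
    rw [this]
    simp

/-- Inverse transform sampling. -/
lemma map_qf : Measure.map (qf P) (volume.restrict (Set.Ioo 0 1)) = P := by
  have hprob : IsProbabilityMeasure (Measure.map (qf P) (volume.restrict (Set.Ioo (0:ℝ) 1))) := by
    constructor
    rw [Measure.map_apply measurable_qf MeasurableSet.univ]
    simp [Real.volume_Ioo]
  refine Measure.ext_of_Iic _ _ (fun x => ?_)
  rw [Measure.map_apply measurable_qf measurableSet_Iic]
  have hsub : Set.Ioo (0:ℝ) (ProbabilityTheory.cdf P x) ⊆ qf P ⁻¹' Set.Iic x := by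
    intro u hu
    have hu1 : u ∈ Set.Ioo (0:ℝ) 1 :=
      ⟨hu.1, lt_of_lt_of_le hu.2 (ProbabilityTheory.cdf_le_one P x)⟩
    exact Set.mem_preimage.mpr (Set.mem_Iic.mpr ((qf_le_iff hu1).mpr hu.2.le))
  have hsup : qf P ⁻¹' Set.Iic x ∩ Set.Ioo (0:ℝ) 1 ⊆ Set.Ioc (0:ℝ) (ProbabilityTheory.cdf P x) := by
    rintro u ⟨hu, hu1⟩
    exact ⟨hu1.1, (qf_le_iff hu1).mp hu⟩
  rw [Measure.restrict_apply (measurable_qf measurableSet_Iic)]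
  refine le_antisymm ?_ ?_
  · refine le_trans (measure_mono hsup) ?_
    rw [Real.volume_Ioc, ← ProbabilityTheory.ofReal_cdf P x]
    simp
  · have h1 : volume (Set.Ioo (0:ℝ) (ProbabilityTheory.cdf P x)) ≤
        volume (qf P ⁻¹' Set.Iic x ∩ Set.Ioo (0:ℝ) 1) := by
      refine measure_mono (fun u hu => ?_)
      refine ⟨hsub hu, hu.1, lt_of_lt_of_le hu.2 (ProbabilityTheory.cdf_le_one P x)⟩
    refine le_trans ?_ h1
    rw [Real.volume_Ioo, ← ProbabilityTheory.ofReal_cdf P x]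
    simp





variable {P A B : Measure ℝ} [IsProbabilityMeasure P]

/-- key: `qf P u < t → u ≤ (P (Iio t)).toReal` -/
lemma le_lcdf_of_qf_lt {u t : ℝ} (hu : u ∈ Set.Ioo (0:ℝ) 1) (h : qf P u < t) :
    u ≤ (P (Set.Iio t)).toReal := by
  have h1 : u ≤ ProbabilityTheory.cdf P (qf P u) := (qf_le_iff hu).mp le_rfl
  have h2 : ENNReal.ofReal u ≤ P (Set.Iio t) := by
    calc ENNReal.ofReal u ≤ ENNReal.ofReal (ProbabilityTheory.cdf P (qf P u)) :=
          ENNReal.ofReal_le_ofReal h1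
    _ = P (Set.Iic (qf P u)) := ProbabilityTheory.ofReal_cdf P _
    _ ≤ P (Set.Iio t) := measure_mono (Set.Iic_subset_Iio.mpr h)
  have := ENNReal.toReal_mono (measure_ne_top P _) h2
  rwa [ENNReal.toReal_ofReal hu.1.le] at this

lemma qf_lt_of_lt_lcdf {u t : ℝ} (hu : u ∈ Set.Ioo (0:ℝ) 1)
    (h : u < (P (Set.Iio t)).toReal) : qf P u < t := by
  have hIio : Set.Iio t = ⋃ n : ℕ, Set.Iic (t - 1/(n+1)) := by
    ext z
    simp only [Set.mem_Iio, Set.mem_iUnion, Set.mem_Iic]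
    constructor
    · intro hz
      obtain ⟨n, hn⟩ := exists_nat_one_div_lt (show (0:ℝ) < t - z by linarith)
      exact ⟨n, by linarith⟩
    · rintro ⟨n, hn⟩
      have : (0:ℝ) < 1/(n+1 : ℝ) := by positivity
      linarith
  have hmono : Monotone (fun n : ℕ => Set.Iic (t - 1/(n+1 : ℝ))) := by
    intro m n hmn
    apply Set.Iic_subset_Iic.mpr
    have hmn' : (m:ℝ) ≤ n := Nat.cast_le.mpr hmn
    have h1 : (1:ℝ)/(n+1) ≤ 1/(m+1) := by
      apply one_div_le_one_div_of_le (by positivity)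
      linarith
    linarith
  have hsup : P (Set.Iio t) = ⨆ n : ℕ, P (Set.Iic (t - 1/(n+1))) := by
    rw [hIio]
    exact hmono.directed_le.measure_iUnion
  have h' : ENNReal.ofReal u < P (Set.Iio t) := by
    have := ENNReal.ofReal_lt_ofReal_iff_of_nonneg hu.1.le |>.mpr h
    rwa [ENNReal.ofReal_toReal (measure_ne_top P _)] at this
  rw [hsup] at h'
  obtain ⟨n, hn⟩ := lt_iSup_iff.mp h'
  have hcdf : u ≤ ProbabilityTheory.cdf P (t - 1/(n+1)) := by
    have := ENNReal.toReal_mono (measure_ne_top P _) hn.le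
    rw [ENNReal.toReal_ofReal hu.1.le] at this
    rw [ProbabilityTheory.cdf_eq_real]; exact this
  have := (qf_le_iff hu).mpr hcdf
  have hpos : (0:ℝ) < 1/(n+1 : ℝ) := by positivity
  linarith

variable [IsProbabilityMeasure A] [IsProbabilityMeasure B]

/-- The central band-measure computation for the monotone (quantile) coupling. -/
lemma vol_band (s t : ℝ) :
    volume.restrict (Set.Ioo 0 1) {u | qf A u ≤ s ∧ t ≤ qf B u}
      = A (Set.Iic s) - B (Set.Iio t) := by
  set a := ProbabilityTheory.cdf A s with ha
  set c := (B (Set.Iio t)).toReal with hc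
  have hc0 : 0 ≤ c := ENNReal.toReal_nonneg
  have ha1 : a ≤ 1 := ProbabilityTheory.cdf_le_one A s
  have hmeas : MeasurableSet {u : ℝ | qf A u ≤ s ∧ t ≤ qf B u} := by
    have h1 : MeasurableSet {u : ℝ | qf A u ≤ s} := measurable_qf measurableSet_Iic
    have h2 : MeasurableSet {u : ℝ | t ≤ qf B u} := measurable_qf measurableSet_Ici
    exact h1.inter h2
  rw [Measure.restrict_apply hmeas]
  have hval : volume ({u : ℝ | qf A u ≤ s ∧ t ≤ qf B u} ∩ Set.Ioo 0 1)
      = ENNReal.ofReal (a - c) := by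
    refine le_antisymm ?_ ?_
    · have hsub : {u : ℝ | qf A u ≤ s ∧ t ≤ qf B u} ∩ Set.Ioo 0 1 ⊆ Set.Icc c a := by
        rintro u ⟨⟨h1, h2⟩, hu⟩
        constructor
        · by_contra hlt
          push_neg at hlt
          exact absurd (qf_lt_of_lt_lcdf hu hlt) (not_lt.mpr h2)
        · have := (qf_le_iff hu).mp h1
          exact this
      calc volume _ ≤ volume (Set.Icc c a) := measure_mono hsub
        _ = ENNReal.ofReal (a - c) := Real.volume_Icc
    · have hsub : Set.Ioo c a ⊆ {u : ℝ | qf A u ≤ s ∧ t ≤ qf B u} ∩ Set.Ioo 0 1 := by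
        intro u hu
        have hu1 : u ∈ Set.Ioo (0:ℝ) 1 :=
          ⟨lt_of_le_of_lt hc0 hu.1, lt_of_lt_of_le hu.2 ha1⟩
        refine ⟨⟨(qf_le_iff hu1).mpr hu.2.le, ?_⟩, hu1⟩
        by_contra hlt
        push_neg at hlt
        exact absurd (le_lcdf_of_qf_lt hu1 hlt) (not_le.mpr hu.1)
      calc ENNReal.ofReal (a - c) = volume (Set.Ioo c a) := Real.volume_Ioo.symm
        _ ≤ volume _ := measure_mono hsub
  rw [hval]
  rw [ENNReal.ofReal_sub _ hc0]
  congr 1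
  · exact ProbabilityTheory.ofReal_cdf A s
  · rw [hc, ENNReal.ofReal_toReal (measure_ne_top B _)]

/-- Hoeffding-type lower bound for an arbitrary coupling. -/
lemma coupling_band_le {μ ν : Measure ℝ} {γ : Measure (ℝ × ℝ)}
    (hf : γ.map Prod.fst = μ) (hs : γ.map Prod.snd = ν) (s t : ℝ) :
    μ (Set.Iic s) - ν (Set.Iio t) ≤ γ {p : ℝ × ℝ | p.1 ≤ s ∧ t ≤ p.2} := by
  rw [tsub_le_iff_right]
  have h1 : μ (Set.Iic s) = γ (Prod.fst ⁻¹' Set.Iic s) := by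
    rw [← hf, Measure.map_apply measurable_fst measurableSet_Iic]
  have h2 : ν (Set.Iio t) = γ (Prod.snd ⁻¹' Set.Iio t) := by
    rw [← hs, Measure.map_apply measurable_snd measurableSet_Iio]
  rw [h1, h2]
  refine le_trans (measure_mono ?_) (measure_union_le _ _)
  intro p hp
  simp only [Set.mem_preimage, Set.mem_Iic] at hp
  by_cases h : t ≤ p.2
  · exact Or.inl ⟨hp, h⟩
  · exact Or.inr (Set.mem_preimage.mpr (Set.mem_Iio.mpr (not_le.mp h)))



/-- Area of the triangle `x ≤ s < t ≤ y`. -/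
lemma vol_tri {x y : ℝ} (hxy : x ≤ y) :
    volume {q : ℝ × ℝ | x ≤ q.1 ∧ q.1 < q.2 ∧ q.2 ≤ y}
      = ENNReal.ofReal ((y - x)^2 / 2) := by
  have hmeas : MeasurableSet {q : ℝ × ℝ | x ≤ q.1 ∧ q.1 < q.2 ∧ q.2 ≤ y} := by
    refine MeasurableSet.inter ?_ (MeasurableSet.inter ?_ ?_)
    · exact measurableSet_le measurable_const measurable_fst
    · exact measurableSet_lt measurable_fst measurable_snd
    · exact measurableSet_le measurable_snd measurable_const
  rw [MeasureTheory.Measure.volume_eq_prod, Measure.prod_apply hmeas]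
  have hsect : ∀ s : ℝ, volume (Prod.mk s ⁻¹' {q : ℝ × ℝ | x ≤ q.1 ∧ q.1 < q.2 ∧ q.2 ≤ y})
      = Set.indicator (Set.Ici x) (fun s => ENNReal.ofReal (y - s)) s := by
    intro s
    by_cases hx : x ≤ s
    · have : Prod.mk s ⁻¹' {q : ℝ × ℝ | x ≤ q.1 ∧ q.1 < q.2 ∧ q.2 ≤ y} = Set.Ioc s y := by
        ext t; simp [hx, Set.mem_Ioc, and_comm]
      rw [this, Real.volume_Ioc, Set.indicator_of_mem (Set.mem_Ici.mpr hx)]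
    · have : Prod.mk s ⁻¹' {q : ℝ × ℝ | x ≤ q.1 ∧ q.1 < q.2 ∧ q.2 ≤ y} = ∅ := by
        ext t; simp [hx]
      rw [this, Set.indicator_of_notMem (by simpa using hx)]
      simp
  rw [lintegral_congr hsect, lintegral_indicator measurableSet_Ici]
  have hsplit : Set.Ici x = Set.Icc x y ∪ Set.Ioi y := by
    ext s
    simp only [Set.mem_Ici, Set.mem_union, Set.mem_Icc, Set.mem_Ioi]
    constructor
    · intro h
      rcases le_or_gt s y with h' | h'
      · exact Or.inl ⟨h, h'⟩
      · exact Or.inr h'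
    · rintro (⟨h, _⟩ | h)
      · exact h
      · linarith
  rw [hsplit, lintegral_union measurableSet_Ioi (by
    rw [Set.disjoint_iff]
    rintro s ⟨⟨_, h1⟩, h2⟩
    exact absurd h2 (not_lt.mpr h1))]
  have hzero : ∫⁻ s in Set.Ioi y, ENNReal.ofReal (y - s) ∂volume = 0 := by
    have hcong : ∀ᵐ s ∂volume, s ∈ Set.Ioi y →
        ENNReal.ofReal (y - s) = (fun _ : ℝ => (0:ℝ≥0∞)) s := by
      filter_upwards with s hs
      rw [ENNReal.ofReal_eq_zero]
      simp only [Set.mem_Ioi] at hs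
      linarith
    rw [setLIntegral_congr_fun_ae measurableSet_Ioi hcong, lintegral_zero]
  rw [hzero, add_zero]
  have hIcc : ∫⁻ s in Set.Icc x y, ENNReal.ofReal (y - s) ∂volume
      = ENNReal.ofReal (∫ s in Set.Icc x y, (y - s) ∂volume) := by
    rw [← MeasureTheory.ofReal_integral_eq_lintegral_ofReal]
    · exact ((continuous_const.sub continuous_id).integrableOn_Icc)
    · filter_upwards [MeasureTheory.ae_restrict_mem measurableSet_Icc] with s hs
      simp only [Set.mem_Icc] at hs
      have : (0:ℝ) ≤ y - s := by linarith [hs.2]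
      exact this
  rw [hIcc]
  congr 1
  rw [MeasureTheory.integral_Icc_eq_integral_Ioc, ← intervalIntegral.integral_of_le hxy]
  have h1 : ∫ s in x..y, (y - s) = (y - x) * y - (y^2 - x^2)/2 := by
    rw [intervalIntegral.integral_sub intervalIntegrable_const intervalIntegral.intervalIntegrable_id]
    rw [intervalIntegral.integral_const, integral_id]
    simp [smul_eq_mul]
  rw [h1]; ring_nf

/-- Pointwise identity: squared distance as twice a planar volume. -/
lemma pt_identity (x y : ℝ) :
    ENNReal.ofReal (dist x y ^ 2) =
      2 * volume {q : ℝ × ℝ | q.1 < q.2 ∧ ((x ≤ q.1 ∧ q.2 ≤ y) ∨ (y ≤ q.1 ∧ q.2 ≤ x))} := by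
  rcases le_total x y with h | h
  · have hset : {q : ℝ × ℝ | q.1 < q.2 ∧ ((x ≤ q.1 ∧ q.2 ≤ y) ∨ (y ≤ q.1 ∧ q.2 ≤ x))}
        = {q : ℝ × ℝ | x ≤ q.1 ∧ q.1 < q.2 ∧ q.2 ≤ y} := by
      ext q
      simp only [Set.mem_setOf_eq]
      constructor
      · rintro ⟨hlt, (⟨h1, h2⟩ | ⟨h1, h2⟩)⟩
        · exact ⟨h1, hlt, h2⟩
        · exfalso; linarith
      · rintro ⟨h1, hlt, h2⟩
        exact ⟨hlt, Or.inl ⟨h1, h2⟩⟩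
    rw [hset, vol_tri h, Real.dist_eq, ← ENNReal.ofReal_ofNat,
      ← ENNReal.ofReal_mul (by norm_num)]
    congr 1
    rw [sq_abs]
    ring
  · have hset : {q : ℝ × ℝ | q.1 < q.2 ∧ ((x ≤ q.1 ∧ q.2 ≤ y) ∨ (y ≤ q.1 ∧ q.2 ≤ x))}
        = {q : ℝ × ℝ | y ≤ q.1 ∧ q.1 < q.2 ∧ q.2 ≤ x} := by
      ext q
      simp only [Set.mem_setOf_eq]
      constructor
      · rintro ⟨hlt, (⟨h1, h2⟩ | ⟨h1, h2⟩)⟩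
        · exfalso; linarith
        · exact ⟨h1, hlt, h2⟩
      · rintro ⟨h1, hlt, h2⟩
        exact ⟨hlt, Or.inr ⟨h1, h2⟩⟩
    rw [hset, vol_tri h, Real.dist_eq, ← ENNReal.ofReal_ofNat,
      ← ENNReal.ofReal_mul (by norm_num)]
    congr 1
    rw [sq_abs]
    ring





lemma coupling_band_le' {μ ν : Measure ℝ} {γ : Measure (ℝ × ℝ)}
    (hf : γ.map Prod.fst = μ) (hs : γ.map Prod.snd = ν) (s t : ℝ) :
    ν (Set.Iic s) - μ (Set.Iio t) ≤ γ {p : ℝ × ℝ | p.2 ≤ s ∧ t ≤ p.1} := by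
  have hswapf : (γ.map Prod.swap).map Prod.fst = ν := by
    rw [Measure.map_map measurable_fst measurable_swap]
    exact hs
  have hswaps : (γ.map Prod.swap).map Prod.snd = μ := by
    rw [Measure.map_map measurable_snd measurable_swap]
    exact hf
  have h := coupling_band_le hswapf hswaps s t
  have hm : MeasurableSet {p : ℝ × ℝ | p.1 ≤ s ∧ t ≤ p.2} :=
    (measurableSet_le measurable_fst measurable_const).inter
      (measurableSet_le measurable_const measurable_snd)
  rwa [Measure.map_apply measurable_swap hm] at h

/-- transport cost of a plan -/
def cost (γ : Measure (ℝ × ℝ)) : ℝ≥0∞ := ∫⁻ p, ENNReal.ofReal (dist p.1 p.2 ^ 2) ∂γ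

lemma coupling_isProb {μ : Measure ℝ} [IsProbabilityMeasure μ] {γ : Measure (ℝ × ℝ)}
    (hf : γ.map Prod.fst = μ) : IsProbabilityMeasure γ := by
  constructor
  have h1 : γ Set.univ = γ.map Prod.fst Set.univ := by
    rw [Measure.map_apply measurable_fst MeasurableSet.univ, Set.preimage_univ]
  rw [h1, hf, measure_univ]

def bandSet (q : ℝ × ℝ) : Set (ℝ × ℝ) := {p : ℝ × ℝ | p.1 ≤ q.1 ∧ q.2 ≤ p.2}
def bandSet' (q : ℝ × ℝ) : Set (ℝ × ℝ) := {p : ℝ × ℝ | p.2 ≤ q.1 ∧ q.2 ≤ p.1}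

lemma measurable_bandSet (q : ℝ × ℝ) : MeasurableSet (bandSet q) :=
  (measurableSet_le measurable_fst measurable_const).inter
    (measurableSet_le measurable_const measurable_snd)

lemma measurable_bandSet' (q : ℝ × ℝ) : MeasurableSet (bandSet' q) :=
  (measurableSet_le measurable_snd measurable_const).inter
    (measurableSet_le measurable_const measurable_fst)

/-- The coupling cost as a double integral of band measures. -/
lemma cost_eq (γ : Measure (ℝ × ℝ)) [IsProbabilityMeasure γ] :
    cost γ = 2 * ∫⁻ q, Set.indicator {q : ℝ × ℝ | q.1 < q.2}
      (fun q => γ (bandSet q) + γ (bandSet' q)) q ∂volume := by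
  classical
  set S : Set ((ℝ × ℝ) × (ℝ × ℝ)) :=
    {r | r.2.1 < r.2.2 ∧ ((r.1.1 ≤ r.2.1 ∧ r.2.2 ≤ r.1.2) ∨ (r.1.2 ≤ r.2.1 ∧ r.2.2 ≤ r.1.1))}
    with hS
  have m21 : Measurable fun r : (ℝ × ℝ) × (ℝ × ℝ) => r.2.1 := measurable_fst.comp measurable_snd
  have m22 : Measurable fun r : (ℝ × ℝ) × (ℝ × ℝ) => r.2.2 := measurable_snd.comp measurable_snd
  have m11 : Measurable fun r : (ℝ × ℝ) × (ℝ × ℝ) => r.1.1 := measurable_fst.comp measurable_fst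
  have m12 : Measurable fun r : (ℝ × ℝ) × (ℝ × ℝ) => r.1.2 := measurable_snd.comp measurable_fst
  have hSmeas : MeasurableSet S :=
    (measurableSet_lt m21 m22).inter
      (((measurableSet_le m11 m21).inter (measurableSet_le m22 m12)).union
        ((measurableSet_le m12 m21).inter (measurableSet_le m22 m11)))
  have step1 : cost γ = ∫⁻ p, 2 * (∫⁻ q, S.indicator 1 (p, q) ∂volume) ∂γ := by
    refine lintegral_congr (fun p => ?_)
    rw [pt_identity p.1 p.2]
    congr 1
    have hsect : {q : ℝ × ℝ | (p, q) ∈ S} =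
        {q : ℝ × ℝ | q.1 < q.2 ∧ ((p.1 ≤ q.1 ∧ q.2 ≤ p.2) ∨ (p.2 ≤ q.1 ∧ q.2 ≤ p.1))} := rfl
    rw [← hsect]
    have : {q : ℝ × ℝ | (p, q) ∈ S} = Prod.mk p ⁻¹' S := rfl
    rw [this, ← lintegral_indicator_one (measurable_prodMk_left hSmeas)]
    refine lintegral_congr (fun q => ?_)
    simp only [Set.indicator_apply, Set.mem_preimage, Pi.one_apply]
  have hmeasInd : Measurable (Function.uncurry fun p q : ℝ × ℝ => S.indicator
      (1 : (ℝ × ℝ) × (ℝ × ℝ) → ℝ≥0∞) (p, q)) := by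
    have : (Function.uncurry fun p q : ℝ × ℝ => S.indicator
        (1 : (ℝ × ℝ) × (ℝ × ℝ) → ℝ≥0∞) (p, q)) = S.indicator 1 := by
      ext r; rfl
    rw [this]
    exact measurable_one.indicator hSmeas
  rw [step1, lintegral_const_mul' _ _ (by norm_num)]
  congr 1
  rw [lintegral_lintegral_swap hmeasInd.aemeasurable]
  refine lintegral_congr (fun q => ?_)
  have hsect : (fun p => S.indicator (1 : (ℝ × ℝ) × (ℝ × ℝ) → ℝ≥0∞) (p, q))
      = Set.indicator ((fun p => (p, q)) ⁻¹' S) 1 := by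
    ext p
    simp only [Set.indicator_apply, Set.mem_preimage, Pi.one_apply]
  rw [hsect, lintegral_indicator_one (measurable_prodMk_right hSmeas)]
  by_cases hq : q.1 < q.2
  · rw [Set.indicator_of_mem (by exact hq)]
    have hset : ((fun p => (p, q)) ⁻¹' S) = bandSet q ∪ bandSet' q := by
      ext p
      simp only [Set.mem_preimage, hS, Set.mem_setOf_eq, Set.mem_union, bandSet, bandSet']
      constructor
      · rintro ⟨_, h⟩; exact h
      · intro h; exact ⟨hq, h⟩
    rw [hset]
    refine measure_union ?_ (measurable_bandSet' q)
    rw [Set.disjoint_iff]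
    rintro p ⟨⟨h1, h2⟩, h3, h4⟩
    simp only [bandSet, bandSet', Set.mem_setOf_eq] at *
    linarith
  · rw [Set.indicator_of_notMem (by exact hq)]
    have hset : ((fun p => (p, q)) ⁻¹' S) = ∅ := by
      ext p
      simp only [Set.mem_preimage, hS, Set.mem_setOf_eq, Set.mem_empty_iff_false, iff_false]
      rintro ⟨h, _⟩
      exact hq h
    rw [hset]
    simp

namespace Opt



variable (μ ν : Measure ℝ) [IsProbabilityMeasure μ] [IsProbabilityMeasure ν]

/-- The monotone (quantile) coupling. -/
def mcoup : Measure (ℝ × ℝ) :=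
  Measure.map (fun u => (qf μ u, qf ν u)) (volume.restrict (Set.Ioo 0 1))

lemma measurable_qf_pair : Measurable (fun u => (qf μ u, qf ν u)) :=
  Measurable.prod measurable_qf measurable_qf

lemma mcoup_fst : (mcoup μ ν).map Prod.fst = μ := by
  rw [mcoup, Measure.map_map measurable_fst (measurable_qf_pair μ ν)]
  exact map_qf

lemma mcoup_snd : (mcoup μ ν).map Prod.snd = ν := by
  rw [mcoup, Measure.map_map measurable_snd (measurable_qf_pair μ ν)]
  exact map_qf

instance : IsProbabilityMeasure (mcoup μ ν) := coupling_isProb (mcoup_fst μ ν)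

lemma mcoup_band (q : ℝ × ℝ) : mcoup μ ν (bandSet q) = μ (Set.Iic q.1) - ν (Set.Iio q.2) := by
  rw [mcoup, Measure.map_apply (measurable_qf_pair μ ν) (measurable_bandSet q)]
  have : (fun u => (qf μ u, qf ν u)) ⁻¹' bandSet q = {u | qf μ u ≤ q.1 ∧ q.2 ≤ qf ν u} := rfl
  rw [this]
  exact vol_band q.1 q.2

lemma mcoup_band' (q : ℝ × ℝ) : mcoup μ ν (bandSet' q) = ν (Set.Iic q.1) - μ (Set.Iio q.2) := by
  rw [mcoup, Measure.map_apply (measurable_qf_pair μ ν) (measurable_bandSet' q)]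
  have : (fun u => (qf μ u, qf ν u)) ⁻¹' bandSet' q = {u | qf ν u ≤ q.1 ∧ q.2 ≤ qf μ u} := rfl
  rw [this]
  exact vol_band q.1 q.2

lemma cost_mcoup_le {γ : Measure (ℝ × ℝ)} (hf : γ.map Prod.fst = μ) (hs : γ.map Prod.snd = ν) :
    cost (mcoup μ ν) ≤ cost γ := by
  have : IsProbabilityMeasure γ := coupling_isProb hf
  rw [cost_eq, cost_eq]
  refine mul_le_mul_right (lintegral_mono (fun q => ?_)) 2
  by_cases hq : q ∈ {q : ℝ × ℝ | q.1 < q.2}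
  · rw [Set.indicator_of_mem hq, Set.indicator_of_mem hq]
    refine add_le_add ?_ ?_
    · rw [mcoup_band]
      exact coupling_band_le hf hs q.1 q.2
    · rw [mcoup_band']
      exact coupling_band_le' hf hs q.1 q.2
  · rw [Set.indicator_of_notMem hq, Set.indicator_of_notMem hq]

/-- The infimum defining `W2sq` is attained by the monotone coupling. -/
lemma W2sq_eq_cost_mcoup : W2sq μ ν = cost (mcoup μ ν) := by
  refine le_antisymm ?_ ?_
  · exact sInf_le ⟨mcoup μ ν, mcoup_fst μ ν, mcoup_snd μ ν, rfl⟩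
  · refine le_sInf ?_
    rintro c ⟨γ, hf, hs, rfl⟩
    exact cost_mcoup_le μ ν hf hs

lemma W2sq_le_cost {γ : Measure (ℝ × ℝ)} (hf : γ.map Prod.fst = μ) (hs : γ.map Prod.snd = ν) :
    W2sq μ ν ≤ cost γ :=
  sInf_le ⟨γ, hf, hs, rfl⟩

end Opt





section Conv

variable (μ : Measure ℝ) [IsProbabilityMeasure μ]

def om : Measure ℝ := volume.restrict (Set.Ioc 0 1)

instance : IsProbabilityMeasure (om) := by
  constructor
  rw [om, Measure.restrict_apply MeasurableSet.univ, Set.univ_inter, Real.volume_Ioc]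
  norm_num

def convCoup : Measure (ℝ × ℝ) :=
  Measure.map (fun r : ℝ × ℝ => (r.1, r.1 + r.2)) (μ.prod om)

lemma measurable_convmap : Measurable (fun r : ℝ × ℝ => (r.1, r.1 + r.2)) :=
  measurable_fst.prodMk (measurable_fst.add measurable_snd)

lemma convCoup_fst : (convCoup μ).map Prod.fst = μ := by
  rw [convCoup, Measure.map_map measurable_fst (measurable_convmap)]
  have : (Prod.fst ∘ fun r : ℝ × ℝ => (r.1, r.1 + r.2)) = Prod.fst := rfl
  rw [this, Measure.map_fst_prod]
  simp [measure_univ]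

def convTarget : Measure ℝ := Measure.map (fun r : ℝ × ℝ => r.1 + r.2) (μ.prod om)

lemma convCoup_snd : (convCoup μ).map Prod.snd = convTarget μ := by
  rw [convCoup, Measure.map_map measurable_snd (measurable_convmap)]
  rfl

instance : IsProbabilityMeasure (convTarget μ) := by
  rw [convTarget]
  exact Measure.isProbabilityMeasure_map (measurable_fst.add measurable_snd).aemeasurable

lemma convTarget_le : convTarget μ ≤ volume := by
  rw [Measure.le_iff]
  intro A hA
  rw [convTarget, Measure.map_apply (show Measurable (fun r : ℝ × ℝ => r.1 + r.2) from measurable_fst.add measurable_snd) hA]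
  have hpre : MeasurableSet ((fun r : ℝ × ℝ => r.1 + r.2) ⁻¹' A) :=
    (measurable_fst.add measurable_snd) hA
  rw [Measure.prod_apply hpre]
  have hbound : ∀ x : ℝ, om (Prod.mk x ⁻¹' ((fun r : ℝ × ℝ => r.1 + r.2) ⁻¹' A)) ≤ volume A := by
    intro x
    have h1 : Prod.mk x ⁻¹' ((fun r : ℝ × ℝ => r.1 + r.2) ⁻¹' A) = (fun u : ℝ => x + u) ⁻¹' A := rfl
    rw [h1, om]
    refine le_trans (Measure.restrict_le_self _) ?_
    exact le_of_eq (measure_preimage_add volume x A)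
  calc ∫⁻ x, om (Prod.mk x ⁻¹' ((fun r : ℝ × ℝ => r.1 + r.2) ⁻¹' A)) ∂μ
      ≤ ∫⁻ _, volume A ∂μ := lintegral_mono hbound
    _ = volume A := by rw [lintegral_const, measure_univ, mul_one]

lemma convCoup_cost : cost (convCoup μ) ≤ 1 := by
  rw [cost, convCoup, lintegral_map (by fun_prop) (measurable_convmap)]
  have hprodr : μ.prod om = (μ.prod volume).restrict (Set.univ ×ˢ Set.Ioc 0 1) := by
    rw [om, ← Measure.prod_restrict, Measure.restrict_univ]
  rw [hprodr]
  have hb : ∀ r : ℝ × ℝ, r ∈ Set.univ ×ˢ Set.Ioc (0:ℝ) 1 →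
      ENNReal.ofReal (dist (r.1, r.1 + r.2).1 (r.1, r.1 + r.2).2 ^ 2) ≤ 1 := by
    rintro ⟨x, u⟩ ⟨-, hu⟩
    simp only [Real.dist_eq]
    have : |x - (x + u)| = |u| := by
      rw [abs_sub_comm]; ring_nf
    rw [this]
    rw [← ENNReal.ofReal_one]
    apply ENNReal.ofReal_le_ofReal
    rw [sq_abs]
    nlinarith [hu.1, hu.2]
  calc ∫⁻ r in Set.univ ×ˢ Set.Ioc (0:ℝ) 1,
        ENNReal.ofReal (dist (r.1, r.1 + r.2).1 (r.1, r.1 + r.2).2 ^ 2) ∂(μ.prod volume)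
      ≤ ∫⁻ _ in Set.univ ×ˢ Set.Ioc (0:ℝ) 1, 1 ∂(μ.prod volume) := by
        apply setLIntegral_mono measurable_const hb
    _ = (μ.prod volume) (Set.univ ×ˢ Set.Ioc (0:ℝ) 1) := by
        rw [setLIntegral_one]
    _ = 1 := by
        rw [Measure.prod_prod, measure_univ, one_mul, Real.volume_Ioc]
        norm_num

end Conv

/-- Saturation slack: strict inequality on every interval. -/
lemma slack_lt {ν : Measure ℝ} (hle : ν ≤ volume)
    (hsat : ∀ a b : ℝ, a < b →
      ν.restrict (Set.Ioo a b) ≠ volume.restrict (Set.Ioo a b))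
    {a b : ℝ} (hab : a < b) : ν (Set.Ioo a b) < volume (Set.Ioo a b) := by
  rcases lt_or_eq_of_le (hle (Set.Ioo a b)) with h | h
  · exact h
  · exfalso
    apply hsat a b hab
    ext A hA
    rw [Measure.restrict_apply hA, Measure.restrict_apply hA]
    by_contra hne
    have hlt : ν (A ∩ Set.Ioo a b) < volume (A ∩ Set.Ioo a b) :=
      lt_of_le_of_ne (hle _) hne
    have h2 : ν (Set.Ioo a b \ A) ≤ volume (Set.Ioo a b \ A) := hle _
    have hsplit : ν (Set.Ioo a b) = ν (A ∩ Set.Ioo a b) + ν (Set.Ioo a b \ A) := by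
      rw [← measure_inter_add_diff (Set.Ioo a b) hA]
      congr 1
      rw [Set.inter_comm]
    have hsplit2 : volume (Set.Ioo a b) = volume (A ∩ Set.Ioo a b) + volume (Set.Ioo a b \ A) := by
      rw [← measure_inter_add_diff (Set.Ioo a b) hA]
      congr 1
      rw [Set.inter_comm]
    have hfin1 : volume (A ∩ Set.Ioo a b) ≠ ⊤ :=
      ne_top_of_le_ne_top (by rw [Real.volume_Ioo]; exact ENNReal.ofReal_ne_top)
        (measure_mono Set.inter_subset_right)
    have hfin2 : volume (Set.Ioo a b \ A) ≠ ⊤ :=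
      ne_top_of_le_ne_top (by rw [Real.volume_Ioo]; exact ENNReal.ofReal_ne_top)
        (measure_mono Set.diff_subset)
    have hfin3 : ν (Set.Ioo a b \ A) ≠ ⊤ := ne_top_of_le_ne_top hfin2 h2
    have : ν (Set.Ioo a b) < volume (Set.Ioo a b) := by
      rw [hsplit, hsplit2]
      exact lt_of_lt_of_le (ENNReal.add_lt_add_right hfin3 hlt) (add_le_add_right h2 _)
    rw [h] at this
    exact lt_irrefl _ this

/-- A zero-cost coupling forces equal marginals. -/
lemma eq_of_cost_zero {μ ν : Measure ℝ} {γ : Measure (ℝ × ℝ)}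
    (hf : γ.map Prod.fst = μ) (hs : γ.map Prod.snd = ν) (h0 : cost γ = 0) : μ = ν := by
  have hmeas : Measurable (fun p : ℝ × ℝ => ENNReal.ofReal (dist p.1 p.2 ^ 2)) := by fun_prop
  rw [cost, lintegral_eq_zero_iff hmeas] at h0
  have hdiag : γ {p : ℝ × ℝ | p.1 ≠ p.2} = 0 := by
    have hsub : {p : ℝ × ℝ | p.1 ≠ p.2} ⊆
        {p : ℝ × ℝ | ENNReal.ofReal (dist p.1 p.2 ^ 2) ≠ 0} := by
      intro p hp
      simp only [Set.mem_setOf_eq] at *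
      rw [Ne, ENNReal.ofReal_eq_zero, not_le]
      have : 0 < dist p.1 p.2 := dist_pos.mpr hp
      positivity
    refine measure_mono_null hsub ?_
    have := h0
    rw [Filter.EventuallyEq, ae_iff] at this
    simpa using this
  ext A hA
  rw [← hf, ← hs, Measure.map_apply measurable_fst hA, Measure.map_apply measurable_snd hA]
  have key : ∀ B C : Set (ℝ × ℝ),
      (B ∩ {p : ℝ × ℝ | p.1 = p.2} ⊆ C) → γ B ≤ γ C := by
    intro B C hBC
    calc γ B ≤ γ ((B ∩ {p : ℝ × ℝ | p.1 = p.2}) ∪ {p : ℝ × ℝ | p.1 ≠ p.2}) := by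
          refine measure_mono (fun p hp => ?_)
          by_cases h : p.1 = p.2
          · exact Or.inl ⟨hp, h⟩
          · exact Or.inr h
      _ ≤ γ (B ∩ {p : ℝ × ℝ | p.1 = p.2}) + γ {p : ℝ × ℝ | p.1 ≠ p.2} := measure_union_le _ _
      _ = γ (B ∩ {p : ℝ × ℝ | p.1 = p.2}) := by rw [hdiag, add_zero]
      _ ≤ γ C := measure_mono (le_trans (fun p hp => hp) hBC)
  refine le_antisymm (key _ _ ?_) (key _ _ ?_)
  · rintro ⟨x, y⟩ ⟨hx, hxy⟩
    simp only [Set.mem_setOf_eq] at hxy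
    simp only [Set.mem_preimage] at *
    rwa [← hxy]
  · rintro ⟨x, y⟩ ⟨hx, hxy⟩
    simp only [Set.mem_setOf_eq] at hxy
    simp only [Set.mem_preimage] at *
    rwa [hxy]





lemma measurable_costfn : Measurable (fun p : ℝ × ℝ => ENNReal.ofReal (dist p.1 p.2 ^ 2)) := by
  fun_prop

lemma exists_far {γ : Measure (ℝ × ℝ)} (hpos : 0 < cost γ) :
    ∃ r : ℝ, 0 < r ∧ 0 < γ {p : ℝ × ℝ | r ≤ dist p.1 p.2} := by
  by_contra hcon
  push_neg at hcon
  have hall : ∀ n : ℕ, γ {p : ℝ × ℝ | 1/(n+1 : ℝ) ≤ dist p.1 p.2} = 0 := by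
    intro n
    have h := hcon (1/(n+1 : ℝ)) (by positivity)
    exact le_antisymm h zero_le
  have hoff : γ {p : ℝ × ℝ | p.1 ≠ p.2} = 0 := by
    have hsub : {p : ℝ × ℝ | p.1 ≠ p.2} ⊆
        ⋃ n : ℕ, {p : ℝ × ℝ | 1/(n+1 : ℝ) ≤ dist p.1 p.2} := by
      intro p hp
      have : 0 < dist p.1 p.2 := dist_pos.mpr hp
      obtain ⟨n, hn⟩ := exists_nat_one_div_lt this
      exact Set.mem_iUnion.mpr ⟨n, le_of_lt hn⟩
    refine measure_mono_null hsub ?_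
    exact measure_iUnion_null hall
  have hzero : cost γ = 0 := by
    rw [cost, lintegral_eq_zero_iff measurable_costfn]
    rw [Filter.EventuallyEq, ae_iff]
    refine measure_mono_null (fun p hp => ?_) hoff
    simp only [Set.mem_setOf_eq, Pi.zero_apply] at hp ⊢
    intro heq
    apply hp
    rw [heq]
    simp
  rw [hzero] at hpos
  exact lt_irrefl _ hpos

lemma exists_cell {γ : Measure (ℝ × ℝ)} {D : Set (ℝ × ℝ)} (hD : 0 < γ D) {ρ : ℝ} (hρ : 0 < ρ) :
    ∃ a : ℝ, 0 < γ (D ∩ (Set.Ioc a (a + ρ) ×ˢ Set.univ)) := by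
  by_contra hcon
  push_neg at hcon
  have hall : ∀ j : ℤ, γ (D ∩ (Set.Ioc (j * ρ) (j * ρ + ρ) ×ˢ Set.univ)) = 0 :=
    fun j => le_antisymm (hcon (j * ρ)) zero_le
  have hcover : D ⊆ ⋃ j : ℤ, D ∩ (Set.Ioc ((j : ℝ) * ρ) ((j : ℝ) * ρ + ρ) ×ˢ Set.univ) := by
    intro p hp
    set j : ℤ := ⌈p.1 / ρ⌉ - 1 with hj
    refine Set.mem_iUnion.mpr ⟨j, hp, ⟨?_, ?_⟩, Set.mem_univ _⟩
    · show (j : ℝ) * ρ < p.1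
      have h1 : (⌈p.1 / ρ⌉ : ℝ) - 1 < p.1 / ρ := by
        have := Int.ceil_lt_add_one (p.1 / ρ)
        linarith
      have h2 : ((j : ℤ) : ℝ) = (⌈p.1 / ρ⌉ : ℝ) - 1 := by
        rw [hj]; push_cast; ring
      rw [h2]
      calc ((⌈p.1 / ρ⌉ : ℝ) - 1) * ρ < (p.1 / ρ) * ρ := by
            exact mul_lt_mul_of_pos_right h1 hρ
        _ = p.1 := by field_simp
    · show p.1 ≤ (j : ℝ) * ρ + ρ
      have h1 : p.1 / ρ ≤ (⌈p.1 / ρ⌉ : ℝ) := Int.le_ceil _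
      have h2 : ((j : ℤ) : ℝ) = (⌈p.1 / ρ⌉ : ℝ) - 1 := by
        rw [hj]; push_cast; ring
      have h3 : p.1 ≤ (⌈p.1 / ρ⌉ : ℝ) * ρ := by
        calc p.1 = (p.1 / ρ) * ρ := by field_simp
          _ ≤ (⌈p.1 / ρ⌉ : ℝ) * ρ := mul_le_mul_of_nonneg_right h1 hρ.le
      rw [h2]
      linarith
  have : γ D = 0 := by
    refine measure_mono_null hcover ?_
    exact measure_iUnion_null hall
  rw [this] at hD
  exact lt_irrefl _ hD


lemma surgery {μ ν : Measure ℝ} [IsProbabilityMeasure μ] [IsProbabilityMeasure ν]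
    (hle : ν ≤ volume)
    (hslack : ∀ a b : ℝ, a < b → ν (Set.Ioo a b) < volume (Set.Ioo a b))
    {γ : Measure (ℝ × ℝ)} (hf : γ.map Prod.fst = μ) (hsnd : γ.map Prod.snd = ν)
    (hfin : cost γ ≠ ⊤) (hpos : 0 < cost γ) :
    ∃ σ : Measure ℝ, IsProbabilityMeasure σ ∧ σ ≤ volume ∧
      ∃ γ' : Measure (ℝ × ℝ), γ'.map Prod.fst = μ ∧ γ'.map Prod.snd = σ ∧ cost γ' < cost γ := by
  have hγprob : IsProbabilityMeasure γ := coupling_isProb hf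
  obtain ⟨r, hr, hD⟩ := exists_far hpos
  set D := {p : ℝ × ℝ | r ≤ dist p.1 p.2} with hDdef
  have hDmeas : MeasurableSet D := by
    refine measurableSet_le measurable_const ?_
    fun_prop
  set ρ := r / 8 with hρdef
  have hρ : 0 < ρ := by positivity
  obtain ⟨a, hcell⟩ := exists_cell hD hρ
  set B := Set.Ioc a (a + ρ) with hBdef
  have hBmeas : MeasurableSet B := measurableSet_Ioc
  set S := D ∩ B ×ˢ Set.univ with hSdef
  have hSmeas : MeasurableSet S := hDmeas.inter (hBmeas.prod MeasurableSet.univ)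
  set α := γ S with hαdef
  have hα0 : α ≠ 0 := hcell.ne'
  have hα1 : α ≤ 1 := prob_le_one
  have hαtop : α ≠ ⊤ := ne_top_of_le_ne_top ENNReal.one_ne_top hα1
  set I := Set.Ioo a (a + ρ) with hIdef
  have hImeas : MeasurableSet I := measurableSet_Ioo
  have hIvol : volume I = ENNReal.ofReal ρ := by
    rw [hIdef, Real.volume_Ioo]
    congr 1
    ring
  have hIvol_top : volume I ≠ ⊤ := by rw [hIvol]; exact ENNReal.ofReal_ne_top
  have hslt : ν I < volume I := hslack a (a + ρ) (by linarith)
  have hres_le : ν.restrict I ≤ volume.restrict I := Measure.restrict_mono subset_rfl hle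
  set lam := volume.restrict I - ν.restrict I with hlamdef
  set s := volume I - ν I with hsdef
  have hlam_apply : ∀ A : Set ℝ, MeasurableSet A → lam A = volume (A ∩ I) - ν (A ∩ I) := by
    intro A hA
    rw [hlamdef, Measure.sub_apply hA hres_le, Measure.restrict_apply hA,
      Measure.restrict_apply hA]
  have hlam_univ : lam Set.univ = s := by
    rw [hlam_apply Set.univ MeasurableSet.univ, Set.univ_inter]
  have hs0 : s ≠ 0 := by
    rw [hsdef]
    exact (tsub_pos_iff_lt.mpr hslt).ne'
  have hstop : s ≠ ⊤ := ne_top_of_le_ne_top hIvol_top tsub_le_self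
  set ξ := s⁻¹ • lam with hξdef
  have hξuniv : ξ Set.univ = 1 := by
    rw [hξdef, Measure.smul_apply, smul_eq_mul, hlam_univ, ENNReal.inv_mul_cancel hs0 hstop]
  set θ := (γ.restrict S).map Prod.fst with hθdef
  have hθuniv : θ Set.univ = α := by
    rw [hθdef, Measure.map_apply measurable_fst MeasurableSet.univ, Set.preimage_univ,
      Measure.restrict_apply_univ]
  set β := min α s with hβdef
  have hspos : 0 < s := tsub_pos_iff_lt.mpr hslt
  have hβ0 : β ≠ 0 := (lt_min hcell hspos).ne'
  have hβtop : β ≠ ⊤ := ne_top_of_le_ne_top hstop (min_le_right _ _)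
  have hβα : β ≤ α := min_le_left _ _
  have hβs : β ≤ s := min_le_right _ _
  set c := β / α with hcdef
  have hc_le_one : c ≤ 1 := ENNReal.div_le_of_le_mul (by rwa [one_mul])
  have hcα : c * α = β := by
    rw [hcdef, mul_comm, ENNReal.mul_div_cancel hα0 hαtop]
  set γ2 := (c • θ).prod ξ with hγ2def
  set γ' := γ.restrict Sᶜ + (1 - c) • γ.restrict S + γ2 with hγ'def
  -- first marginal
  have hmapfst : γ'.map Prod.fst = μ := by
    rw [hγ'def, Measure.map_add _ _ measurable_fst, Measure.map_add _ _ measurable_fst,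
      Measure.map_smul]
    have h2 : γ2.map Prod.fst = c • θ := by
      rw [hγ2def, Measure.map_fst_prod, hξuniv, one_smul]
    rw [h2]
    have h3 : (γ.restrict S).map Prod.fst = θ := rfl
    rw [h3, add_assoc, ← add_smul, tsub_add_cancel_of_le hc_le_one, one_smul,
      ← Measure.map_add _ _ measurable_fst, Measure.restrict_compl_add_restrict hSmeas, hf]
  set σ := γ'.map Prod.snd with hσdef
  -- expansion of σ on measurable sets
  have hσ_apply : ∀ A : Set ℝ, MeasurableSet A →
      σ A = γ.restrict Sᶜ (Prod.snd ⁻¹' A) + (1 - c) * γ.restrict S (Prod.snd ⁻¹' A)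
        + β * ξ A := by
    intro A hA
    rw [hσdef, hγ'def, Measure.map_add _ _ measurable_snd, Measure.map_add _ _ measurable_snd,
      Measure.map_smul]
    have h2 : γ2.map Prod.snd = β • ξ := by
      rw [hγ2def, Measure.map_snd_prod, Measure.smul_apply, smul_eq_mul, hθuniv, hcα]
    rw [h2]
    simp only [Measure.add_apply, Measure.smul_apply, smul_eq_mul]
    rw [Measure.map_apply measurable_snd hA, Measure.map_apply measurable_snd hA]
  have hξ_le : ∀ A : Set ℝ, MeasurableSet A → β * ξ A ≤ lam A := by
    intro A hA
    rw [hξdef, Measure.smul_apply, smul_eq_mul, ← mul_assoc]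
    calc β * s⁻¹ * lam A ≤ s * s⁻¹ * lam A := by
          exact mul_le_mul_left (mul_le_mul_left hβs _) _
      _ = lam A := by rw [ENNReal.mul_inv_cancel hs0 hstop, one_mul]
  -- σ is dominated by ν + lam
  have hσ_le : ∀ A : Set ℝ, MeasurableSet A → σ A ≤ ν A + lam A := by
    intro A hA
    rw [hσ_apply A hA]
    have h1 : γ.restrict Sᶜ (Prod.snd ⁻¹' A) + (1 - c) * γ.restrict S (Prod.snd ⁻¹' A)
        ≤ ν A := by
      calc γ.restrict Sᶜ (Prod.snd ⁻¹' A) + (1 - c) * γ.restrict S (Prod.snd ⁻¹' A)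
          ≤ γ.restrict Sᶜ (Prod.snd ⁻¹' A) + 1 * γ.restrict S (Prod.snd ⁻¹' A) := by
            exact add_le_add_right (mul_le_mul_left tsub_le_self _) _
        _ = (γ.restrict Sᶜ + γ.restrict S) (Prod.snd ⁻¹' A) := by
            rw [one_mul, Measure.add_apply]
        _ = γ (Prod.snd ⁻¹' A) := by rw [Measure.restrict_compl_add_restrict hSmeas]
        _ = ν A := by rw [← hsnd, Measure.map_apply measurable_snd hA]
    exact add_le_add h1 (hξ_le A hA)
  -- σ ≤ volume
  have hσ_vol : σ ≤ volume := by
    rw [Measure.le_iff]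
    intro A hA
    refine le_trans (hσ_le A hA) ?_
    rw [hlam_apply A hA]
    have hν_split : ν A = ν (A ∩ I) + ν (A \ I) := (measure_inter_add_diff A hImeas).symm
    have hν_fin : ν (A ∩ I) ≤ volume (A ∩ I) := hle _
    calc ν A + (volume (A ∩ I) - ν (A ∩ I))
        = ν (A ∩ I) + ν (A \ I) + (volume (A ∩ I) - ν (A ∩ I)) := by rw [← hν_split]
      _ = (ν (A ∩ I) + (volume (A ∩ I) - ν (A ∩ I))) + ν (A \ I) := by ring
      _ = volume (A ∩ I) + ν (A \ I) := by rw [add_tsub_cancel_of_le hν_fin]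
      _ ≤ volume (A ∩ I) + volume (A \ I) := add_le_add_right (hle _) _
      _ = volume A := measure_inter_add_diff A hImeas
  -- σ is a probability measure
  have hσ_prob : IsProbabilityMeasure σ := by
    constructor
    rw [hσ_apply Set.univ MeasurableSet.univ]
    simp only [Set.preimage_univ]
    rw [Measure.restrict_apply_univ, Measure.restrict_apply_univ, hξuniv, mul_one]
    have hcompl : γ Sᶜ = 1 - α := by
      rw [measure_compl hSmeas (measure_ne_top γ S), measure_univ]
    have hsub : (1 - c) * α = α - β := by
      rw [ENNReal.sub_mul (fun _ _ => hαtop), one_mul, hcα]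
    rw [hcompl, hsub, add_assoc, tsub_add_cancel_of_le hβα, tsub_add_cancel_of_le hα1]
  -- cost comparison
  set f := fun p : ℝ × ℝ => ENNReal.ofReal (dist p.1 p.2 ^ 2) with hfdef
  set C1 := ∫⁻ p, f p ∂(γ.restrict Sᶜ) with hC1def
  set C2 := ∫⁻ p, f p ∂(γ.restrict S) with hC2def
  have hcost_split : cost γ = C1 + C2 := by
    rw [cost]
    conv_lhs => rw [← Measure.restrict_compl_add_restrict hSmeas (μ := γ)]
    rw [lintegral_add_measure]
  have hC1fin : C1 ≠ ⊤ := by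
    refine ne_top_of_le_ne_top hfin ?_
    rw [hcost_split]
    exact le_add_self.trans (le_of_eq (add_comm C2 C1))
  have hC2fin : C2 ≠ ⊤ := by
    refine ne_top_of_le_ne_top hfin ?_
    rw [hcost_split]
    exact le_add_self
  have hC2lb : ENNReal.ofReal (r ^ 2) * α ≤ C2 := by
    have : ∫⁻ _ in S, ENNReal.ofReal (r ^ 2) ∂γ ≤ ∫⁻ p in S, f p ∂γ := by
      refine setLIntegral_mono measurable_costfn ?_
      intro p hp
      have hdist : r ≤ dist p.1 p.2 := hp.1
      exact ENNReal.ofReal_le_ofReal (pow_le_pow_left₀ hr.le hdist 2)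
    rwa [setLIntegral_const] at this
  have hTle : ∫⁻ p, f p ∂γ2 ≤ ENNReal.ofReal (ρ ^ 2) * β := by
    have hθB : (c • θ) Bᶜ = 0 := by
      rw [Measure.smul_apply, smul_eq_mul, hθdef,
        Measure.map_apply measurable_fst hBmeas.compl, Measure.restrict_apply
          (measurable_fst hBmeas.compl)]
      have : Prod.fst ⁻¹' Bᶜ ∩ S = ∅ := by
        rw [Set.eq_empty_iff_forall_notMem]
        rintro p ⟨hpB, hpS⟩
        exact hpB hpS.2.1
      rw [this, measure_empty, mul_zero]
    have hξI : ξ Iᶜ = 0 := by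
      rw [hξdef, Measure.smul_apply, smul_eq_mul, hlam_apply Iᶜ hImeas.compl]
      rw [Set.compl_inter_self]
      simp
    have hE : γ2 (B ×ˢ I)ᶜ = 0 := by
      have hsub : (B ×ˢ I)ᶜ ⊆ (Bᶜ ×ˢ Set.univ) ∪ (Set.univ ×ˢ Iᶜ) := by
        intro p hp
        simp only [Set.mem_compl_iff, Set.mem_prod, not_and] at hp
        by_cases h1 : p.1 ∈ B
        · exact Or.inr ⟨Set.mem_univ _, hp h1⟩
        · exact Or.inl ⟨h1, Set.mem_univ _⟩
      refine measure_mono_null hsub ?_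
      refine measure_union_null ?_ ?_
      · rw [hγ2def, Measure.prod_prod, hθB, zero_mul]
      · rw [hγ2def, Measure.prod_prod, hξI, mul_zero]
    have hsplit : ∫⁻ p, f p ∂γ2 = ∫⁻ p in B ×ˢ I, f p ∂γ2 := by
      conv_lhs => rw [← Measure.restrict_add_restrict_compl (μ := γ2)
        (hBmeas.prod hImeas)]
      rw [lintegral_add_measure]
      have : γ2.restrict (B ×ˢ I)ᶜ = 0 := Measure.restrict_eq_zero.mpr hE
      rw [this, lintegral_zero_measure, add_zero]
    rw [hsplit]
    have hbound : ∫⁻ p in B ×ˢ I, f p ∂γ2 ≤ ∫⁻ _ in B ×ˢ I, ENNReal.ofReal (ρ ^ 2) ∂γ2 := by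
      refine setLIntegral_mono measurable_const ?_
      rintro ⟨x, y⟩ ⟨hx, hy⟩
      simp only [hBdef, Set.mem_Ioc] at hx
      simp only [hIdef, Set.mem_Ioo] at hy
      have habs : |x - y| ≤ ρ := by
        rw [abs_le]
        constructor <;> linarith
      refine ENNReal.ofReal_le_ofReal ?_
      have : dist x y = |x - y| := Real.dist_eq x y
      rw [this]
      have h0 : (0:ℝ) ≤ |x - y| := abs_nonneg _
      nlinarith
    refine le_trans hbound ?_
    rw [setLIntegral_const]
    refine mul_le_mul_right ?_ _
    calc γ2 (B ×ˢ I) ≤ γ2 Set.univ := measure_mono (Set.subset_univ _)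
      _ = β := by
        rw [hγ2def, ← Set.univ_prod_univ, Measure.prod_prod, hξuniv, mul_one,
          Measure.smul_apply, smul_eq_mul, hθuniv, hcα]
  -- assembling the strict inequality
  have hcost' : cost γ' = C1 + (1 - c) * C2 + ∫⁻ p, f p ∂γ2 := by
    rw [cost, hγ'def, lintegral_add_measure, lintegral_add_measure, lintegral_smul_measure, smul_eq_mul]
  set X := ENNReal.ofReal (r ^ 2) * β with hXdef
  set Y := ENNReal.ofReal (ρ ^ 2) * β with hYdef
  have hYX : Y < X := by
    rw [hXdef, hYdef]
    have hlt : ENNReal.ofReal (ρ ^ 2) < ENNReal.ofReal (r ^ 2) := by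
      rw [ENNReal.ofReal_lt_ofReal_iff (by positivity)]
      rw [hρdef]; nlinarith
    exact ENNReal.mul_lt_mul_left hβ0 hβtop hlt
  have hXcC2 : X ≤ c * C2 := by
    calc X = c * (ENNReal.ofReal (r ^ 2) * α) := by
          rw [hXdef, mul_left_comm, hcα]
      _ ≤ c * C2 := mul_le_mul_right hC2lb _
  have hXC2 : X ≤ C2 := le_trans hXcC2 (by
    calc c * C2 ≤ 1 * C2 := mul_le_mul_left hc_le_one _
      _ = C2 := one_mul _)
  have h1c : (1 - c) * C2 = C2 - c * C2 := by
    rw [ENNReal.sub_mul (fun _ _ => hC2fin), one_mul]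
  have hfinal : cost γ' < cost γ := by
    calc cost γ' = C1 + (1 - c) * C2 + ∫⁻ p, f p ∂γ2 := hcost'
      _ ≤ C1 + (C2 - c * C2) + Y := by
          refine add_le_add (add_le_add_right (le_of_eq h1c) _) hTle
      _ ≤ C1 + (C2 - X) + Y := by
          refine add_le_add_left (add_le_add_right (tsub_le_tsub_left hXcC2 _) _) _
      _ < C1 + (C2 - X) + X := by
          refine ENNReal.add_lt_add_left ?_ hYX
          refine ENNReal.add_ne_top.mpr ⟨hC1fin, ?_⟩
          exact ne_top_of_le_ne_top hC2fin tsub_le_self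
      _ = C1 + C2 := by rw [add_assoc, tsub_add_cancel_of_le hXC2]
      _ = cost γ := hcost_split.symm
  exact ⟨σ, hσ_prob, hσ_vol, γ', hmapfst, rfl, hfinal⟩



end W2proof

end W2aux

open W2proof W2proof.Opt in
/-- A density bounded by `1` whose saturated set contains no open interval is the
`W₂`-projection onto `K = {0 ≤ ρ' ≤ 1}` of itself only: if `P_K μ = ν` then `μ = ν`. -/
theorem saturated_no_interval_projection (ν : Measure ℝ) (hν : ν ∈ densLEone)
    (hsat : ∀ a b : ℝ, a < b →
      ν.restrict (Set.Ioo a b) ≠ volume.restrict (Set.Ioo a b))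
    (μ : Measure ℝ) (hμ : IsProbabilityMeasure μ)
    (hproj : ∀ σ ∈ densLEone, W2sq μ ν ≤ W2sq μ σ) :
    μ = ν := by
  obtain ⟨hνprob, hνle⟩ := hν
  have hslack : ∀ a b : ℝ, a < b → ν (Set.Ioo a b) < volume (Set.Ioo a b) :=
    fun a b hab => slack_lt hνle hsat hab
  have hm_eq : W2sq μ ν = cost (mcoup μ ν) := W2sq_eq_cost_mcoup μ ν
  have hconvK : convTarget μ ∈ densLEone := ⟨inferInstance, convTarget_le μ⟩
  have hm_le1 : W2sq μ ν ≤ 1 := by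
    refine le_trans (hproj _ hconvK) (le_trans ?_ (convCoup_cost μ))
    exact sInf_le ⟨convCoup μ, convCoup_fst μ, convCoup_snd μ, rfl⟩
  have hmfin : cost (mcoup μ ν) ≠ ⊤ := by
    rw [← hm_eq]
    exact ne_top_of_le_ne_top ENNReal.one_ne_top hm_le1
  rcases eq_or_lt_of_le (zero_le : 0 ≤ cost (mcoup μ ν)) with h0 | hposc
  · exact eq_of_cost_zero (mcoup_fst μ ν) (mcoup_snd μ ν) h0.symm
  · exfalso
    obtain ⟨σ, hσprob, hσle, γ', hγ'f, hγ's, hγ'cost⟩ :=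
      surgery hνle hslack (mcoup_fst μ ν) (mcoup_snd μ ν) hmfin hposc
    have h1 : W2sq μ ν ≤ W2sq μ σ := hproj σ ⟨hσprob, hσle⟩
    have h2 : W2sq μ σ ≤ cost γ' := sInf_le ⟨γ', hγ'f, hγ's, rfl⟩
    have : W2sq μ ν < W2sq μ ν := by
      calc W2sq μ ν ≤ W2sq μ σ := h1
        _ ≤ cost γ' := h2
        _ < cost (mcoup μ ν) := hγ'cost
        _ = W2sq μ ν := hm_eq.symm
    exact lt_irrefl _ this
end
end
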